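/- arXiv:1901.00554 — 11 statements merged into one kernel-verified Lean document; each statement's English description precedes it below -/
import Mathlib

section
/- Let a and b be coprime positive integers and k ∈ ℕ. Then the formal power series over ℤ whose j-th coefficient is 1 if j ∈ S_k(a,b) and 0 otherwise satisfies (∑_{j ∈ S_k(a,b)} X^j) · (1 - X^a) · (1 - X^b) = X^{abk} · (1 - X^{ab}). Equivalently, ∑_{j ∈ S_k(a,b)} X^j = X^{abk}(1 - X^{ab}) / ((1 - X^a)(1 - X^b)) as formal power series. -/
/-- `repCount a b j` is the number of representations of `j` in the form
`m * a + n * b` with `m, n : ℕ`. -/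
noncomputable def repCount (a b j : ℕ) : ℕ :=
  Nat.card {p : ℕ × ℕ // p.1 * a + p.2 * b = j}

/-! Write `r = repCount a b`. Its generating function is `1 / ((1 - X^a) (1 - X^b))`, the product
of the geometric series in `X^a` and `X^b`. Since `a` and `b` are coprime, every `j ≥ a b` has
exactly one representation with `m < b`, and the others come from representations of `j - a b`;
so `r (j + a b) = r j + 1`, while `r j ≤ 1` for `j < a b`. Hence `j ↦ [r j > 0]` has generating
function `(1 - X^(a b)) / ((1 - X^a) (1 - X^b))`, and `S_(k+1) = a b + S_k`, which multiplies the
generating function by `X^(a b)`. -/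

open PowerSeries Finset

theorem PowerSeries.mk_ite_dvd_mul_one_sub_X_pow {R : Type*} [CommRing R] {c : ℕ} (hc : c ≠ 0) :
    (mk fun j => if c ∣ j then (1 : R) else 0) * (1 - X ^ c) = 1 := by
  have h := congrArg (substAlgHom (HasSubst.X_pow (R := R) hc)) (mk_one_mul_one_sub_eq_one R)
  rw [map_mul, map_sub, map_one, substAlgHom_X] at h
  convert h using 2
  ext n
  rw [coe_substAlgHom, coeff_subst_X_pow hc]
  simp

theorem Nat.Coprime.eq_of_mul_add_mul_eq {a b m₁ n₁ m₂ n₂ : ℕ} (hab : Nat.Coprime a b)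
    (hm₁ : m₁ < b) (hm₂ : m₂ < b) (h : m₁ * a + n₁ * b = m₂ * a + n₂ * b) :
    m₁ = m₂ ∧ n₁ = n₂ := by
  have hmod : m₁ * a ≡ m₂ * a [MOD b] := by
    simpa [Nat.ModEq, Nat.add_mul_mod_self_right] using congrArg (· % b) h
  have hm : m₁ = m₂ := Nat.ModEq.eq_of_lt_of_lt (hmod.cancel_right_of_coprime hab.symm) hm₁ hm₂
  subst hm
  exact ⟨rfl, Nat.eq_of_mul_eq_mul_right (by omega) (Nat.add_left_cancel h)⟩

theorem Nat.Coprime.exists_lt_mul_add_mul_eq {a b c : ℕ} (hab : Nat.Coprime a b) (hb : 0 < b)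
    (hc : a * b ≤ c) : ∃ m n, m < b ∧ m * a + n * b = c := by
  have : NeZero b := ⟨hb.ne'⟩
  set m := ((c : ZMod b) * (a : ZMod b)⁻¹).val
  have hm : m < b := ZMod.val_lt _
  have hle : m * a ≤ c := le_trans (Nat.mul_le_mul_right a hm.le) (by rw [Nat.mul_comm]; exact hc)
  have hdvd : b ∣ c - m * a := by
    rw [← ZMod.natCast_eq_zero_iff, Nat.cast_sub hle, Nat.cast_mul, ZMod.natCast_val,
      ZMod.cast_id, mul_assoc, ZMod.inv_mul_of_unit _ ((ZMod.isUnit_iff_coprime a b).2 hab),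
      mul_one, sub_self]
  exact ⟨m, (c - m * a) / b, hm, by rw [Nat.div_mul_cancel hdvd]; omega⟩

section Representations

variable {a b : ℕ}

theorem repCount_eq_ncard (j : ℕ) :
    repCount a b j = {p : ℕ × ℕ | p.1 * a + p.2 * b = j}.ncard :=
  Nat.card_coe_set_eq _

theorem finite_setOf_mul_add_mul_eq (ha : 0 < a) (hb : 0 < b) (j : ℕ) :
    {p : ℕ × ℕ | p.1 * a + p.2 * b = j}.Finite := by
  refine ((Set.finite_Iic j).prod (Set.finite_Iic j)).subset ?_
  rintro ⟨m, n⟩ (h : m * a + n * b = j)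
  exact ⟨le_trans (Nat.le_mul_of_pos_right m ha) (by omega),
    le_trans (Nat.le_mul_of_pos_right n hb) (by omega)⟩

theorem repCount_le_one_of_lt (ha : 0 < a) (hab : Nat.Coprime a b) {j : ℕ} (hj : j < a * b) :
    repCount a b j ≤ 1 := by
  have hb : 0 < b := Nat.pos_of_mul_pos_left (by omega : 0 < a * b)
  have small : ∀ {m n : ℕ}, m * a + n * b = j → m < b := fun {m n} h =>
    Nat.lt_of_mul_lt_mul_right (a := a) (by rw [Nat.mul_comm b]; omega)
  rw [repCount_eq_ncard, Set.ncard_le_one (finite_setOf_mul_add_mul_eq ha hb j)]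
  rintro ⟨m₁, n₁⟩ (h₁ : _ = j) ⟨m₂, n₂⟩ (h₂ : _ = j)
  obtain ⟨rfl, rfl⟩ := hab.eq_of_mul_add_mul_eq (small h₁) (small h₂) (h₁.trans h₂.symm)
  rfl

theorem repCount_add_mul (ha : 0 < a) (hb : 0 < b) (hab : Nat.Coprime a b) (j : ℕ) :
    repCount a b (j + a * b) = repCount a b j + 1 := by
  obtain ⟨m₀, n₀, hm₀, h₀⟩ := hab.exists_lt_mul_add_mul_eq hb (Nat.le_add_left (a * b) j)
  set shift : ℕ × ℕ → ℕ × ℕ := fun p => (p.1 + b, p.2)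
  have shift_inj : shift.Injective := fun p q h => by
    simp only [shift, Prod.mk.injEq] at h; ext <;> omega
  have hset : {p : ℕ × ℕ | p.1 * a + p.2 * b = j + a * b}
      = insert (m₀, n₀) (shift '' {p | p.1 * a + p.2 * b = j}) := by
    ext ⟨m, n⟩
    simp only [Set.mem_ofPred_eq, Set.mem_insert_iff, Set.mem_image, Prod.mk.injEq, Prod.exists,
      shift]
    constructor
    · intro h
      rcases lt_or_ge m b with hm | hm
      · exact .inl (hab.eq_of_mul_add_mul_eq hm hm₀ (h.trans h₀.symm))
      · refine .inr ⟨m - b, n, ?_, by omega, rfl⟩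
        have : a * b ≤ m * a := Nat.mul_comm b a ▸ Nat.mul_le_mul_right a hm
        rw [Nat.sub_mul, Nat.mul_comm b a]
        omega
    · rintro (⟨rfl, rfl⟩ | ⟨m', n', h, rfl, rfl⟩)
      · exact h₀
      · rw [Nat.add_mul, Nat.mul_comm b a]; omega
  have hnot : (m₀, n₀) ∉ shift '' {p | p.1 * a + p.2 * b = j} := by
    rintro ⟨p, -, hp⟩
    simp only [shift, Prod.mk.injEq] at hp
    omega
  rw [repCount_eq_ncard, repCount_eq_ncard, hset,
    Set.ncard_insert_of_notMem hnot ((finite_setOf_mul_add_mul_eq ha hb j).image _),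
    Set.ncard_image_of_injective _ shift_inj]

theorem repCount_eq_card_filter_antidiagonal (ha : 0 < a) (hb : 0 < b) (j : ℕ) :
    repCount a b j = #{q ∈ antidiagonal j | a ∣ q.1 ∧ b ∣ q.2} := by
  have hinj : (Prod.map (· * a) (· * b)).Injective :=
    Prod.map_injective.2 ⟨mul_left_injective₀ ha.ne', mul_left_injective₀ hb.ne'⟩
  rw [repCount_eq_ncard, ← Set.ncard_image_of_injective _ hinj, ← Set.ncard_coe_finset]
  congr 1
  ext ⟨u, v⟩
  simp only [Set.mem_image, Set.mem_ofPred_eq, Prod.exists, Prod.map, Prod.mk.injEq, coe_filter,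
    HasAntidiagonal.mem_antidiagonal]
  constructor
  · rintro ⟨m, n, h, rfl, rfl⟩
    exact ⟨h, dvd_mul_left a m, dvd_mul_left b n⟩
  · rintro ⟨h, ⟨m, rfl⟩, ⟨n, rfl⟩⟩
    exact ⟨m, n, by rw [← h]; ring, mul_comm m a, mul_comm n b⟩

end Representations

section GeneratingFunctions

variable (R : Type*) [CommRing R] {a b : ℕ}

noncomputable def repSeries (a b : ℕ) : R⟦X⟧ :=
  mk fun j => (repCount a b j : R)

/-- `∑_{j ∈ S_k(a,b)} X^j` -/
noncomputable def gtRepSeries (a b k : ℕ) : R⟦X⟧ :=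
  mk fun j => if k < repCount a b j then 1 else 0

theorem repSeries_eq_mul (ha : 0 < a) (hb : 0 < b) :
    repSeries R a b =
      (mk fun j => if a ∣ j then (1 : R) else 0) * mk fun j => if b ∣ j then (1 : R) else 0 := by
  ext j
  simp only [repSeries, coeff_mul, coeff_mk, ite_zero_mul_ite_zero, mul_one, sum_boole,
    repCount_eq_card_filter_antidiagonal ha hb]

theorem repSeries_mul_one_sub_X_pow_mul_one_sub_X_pow (ha : 0 < a) (hb : 0 < b) :
    repSeries R a b * (1 - X ^ a) * (1 - X ^ b) = 1 := by
  rw [repSeries_eq_mul R ha hb, mul_right_comm _ _ (1 - X ^ a), mul_assoc,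
    mk_ite_dvd_mul_one_sub_X_pow ha.ne', mk_ite_dvd_mul_one_sub_X_pow hb.ne', one_mul]

theorem gtRepSeries_zero (ha : 0 < a) (hb : 0 < b) (hab : Nat.Coprime a b) :
    gtRepSeries R a b 0 = repSeries R a b * (1 - X ^ (a * b)) := by
  ext j
  rw [mul_one_sub, map_sub, coeff_mul_X_pow', gtRepSeries, repSeries, coeff_mk, coeff_mk]
  by_cases hj : a * b ≤ j
  · obtain ⟨i, rfl⟩ := Nat.exists_eq_add_of_le' hj
    simp [repCount_add_mul ha hb hab]
  · rcases Nat.le_one_iff_eq_zero_or_eq_one.1 (repCount_le_one_of_lt ha hab (not_le.1 hj)) with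
      h | h <;> simp [hj, h]

theorem gtRepSeries_succ (ha : 0 < a) (hb : 0 < b) (hab : Nat.Coprime a b) (k : ℕ) :
    gtRepSeries R a b (k + 1) = X ^ (a * b) * gtRepSeries R a b k := by
  ext j
  rw [coeff_X_pow_mul', gtRepSeries, gtRepSeries, coeff_mk, coeff_mk]
  by_cases hj : a * b ≤ j
  · obtain ⟨i, rfl⟩ := Nat.exists_eq_add_of_le' hj
    simp [repCount_add_mul ha hb hab]
  · have := repCount_le_one_of_lt ha hab (not_le.1 hj)
    rw [if_neg hj, if_neg (by omega)]

theorem gtRepSeries_eq_X_pow_mul (ha : 0 < a) (hb : 0 < b) (hab : Nat.Coprime a b) (k : ℕ) :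
    gtRepSeries R a b k = X ^ (a * b * k) * gtRepSeries R a b 0 := by
  induction k with
  | zero => rw [mul_zero, pow_zero, one_mul]
  | succ k ih => rw [gtRepSeries_succ R ha hb hab, ih, ← mul_assoc, ← pow_add, mul_add_one,
      add_comm (a * b)]

end GeneratingFunctions

/-- The generating function of the set `S_k(a,b)` of integers with more than `k`
representations satisfies
`(∑_{j ∈ S_k(a,b)} X^j) * (1 - X^a) * (1 - X^b) = X^(a*b*k) * (1 - X^(a*b))`. -/
theorem frobenius_genfct_Sk (a b k : ℕ) (ha : 0 < a) (hb : 0 < b) (hab : Nat.Coprime a b) :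
    (PowerSeries.mk fun j => if k < repCount a b j then (1 : ℤ) else 0) *
        (1 - (PowerSeries.X : PowerSeries ℤ) ^ a) * (1 - (PowerSeries.X : PowerSeries ℤ) ^ b) =
      (PowerSeries.X : PowerSeries ℤ) ^ (a * b * k) *
        (1 - (PowerSeries.X : PowerSeries ℤ) ^ (a * b)) := by
  change gtRepSeries ℤ a b k * _ * _ = _
  rw [gtRepSeries_eq_X_pow_mul ℤ ha hb hab, gtRepSeries_zero ℤ ha hb hab]
  linear_combination (X ^ (a * b * k) * (1 - X ^ (a * b)) : ℤ⟦X⟧) *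
    repSeries_mul_one_sub_X_pow_mul_one_sub_X_pow ℤ ha hb
end

section
/- Let a and b be coprime positive integers and k ≥ 1. Then R_k(a,b) = { ab(k-1) + ia + jb : 0 ≤ i ≤ b-1, 0 ≤ j ≤ a-1 }, and moreover the map (i,j) ↦ ab(k-1) + ia + jb is injective on {0,…,b-1} × {0,…,a-1}; equivalently, ∑_{j ∈ R_k(a,b)} z^j = z^{ab(k-1)} (1 + z^a + z^{2a} + ⋯ + z^{(b-1)a}) (1 + z^b + z^{2b} + ⋯ + z^{(a-1)b}). -/
/-!
Reducing the coefficient of `a` modulo `b` turns every representation `j = m a + n b` into one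
with `m < b`, and by coprimality that `m` is the residue of `j a⁻¹` modulo `b`, so it is unique.
Hence a representable `j` is written uniquely as `a b q + i a + j' b` with `i < b`, `j' < a`,
and its representations are exactly `(i + t b, j' + (q - t) a)` for `t ≤ q`: there are `q + 1`.
-/

namespace RepCount

variable {a b : ℕ}

lemma mul_add_mul_eq_mod_mul_add (m n : ℕ) :
    m * a + n * b = m % b * a + (m / b * a + n) * b := by
  conv_lhs => rw [← Nat.mod_add_div m b]
  ring

lemma eq_and_eq_of_mul_add_mul_eq (hab : a.Coprime b) {i i' x x' : ℕ} (hi : i < b)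
    (hi' : i' < b) (h : i * a + x * b = i' * a + x' * b) : i = i' ∧ x = x' := by
  have hmod : i * a ≡ i' * a [MOD b] := by
    simpa [Nat.ModEq, Nat.add_mul_mod_self_right] using congrArg (· % b) h
  have hii : i = i' := by
    simpa [Nat.ModEq, Nat.mod_eq_of_lt hi, Nat.mod_eq_of_lt hi'] using
      hmod.cancel_right_of_coprime hab.symm
  subst hii
  exact ⟨rfl, Nat.eq_of_mul_eq_mul_right (Nat.zero_lt_of_lt hi) (Nat.add_left_cancel h)⟩

lemma exists_eq_of_mul_add_mul_eq (ha : 0 < a) (hb : 0 < b) {m n j : ℕ}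
    (h : m * a + n * b = j) : ∃ q i j', i < b ∧ j' < a ∧ j = a * b * q + i * a + j' * b := by
  refine ⟨(m / b * a + n) / a, m % b, (m / b * a + n) % a, Nat.mod_lt _ hb, Nat.mod_lt _ ha, ?_⟩
  rw [← h, mul_add_mul_eq_mod_mul_add]
  generalize m / b * a + n = x
  conv_lhs => rw [← Nat.div_add_mod x a]
  ring

theorem repCount_eq (hab : a.Coprime b) {q i j : ℕ} (hi : i < b) (hj : j < a) :
    repCount a b (a * b * q + i * a + j * b) = q + 1 := by
  have hrep (t : Fin (q + 1)) :
      (i + t * b) * a + (j + (q - t) * a) * b = a * b * q + i * a + j * b := by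
    obtain ⟨s, hs⟩ := Nat.exists_eq_add_of_le (Nat.lt_succ_iff.mp t.isLt)
    simp only [hs, Nat.add_sub_cancel_left]
    ring
  let f (t : Fin (q + 1)) : {p : ℕ × ℕ // p.1 * a + p.2 * b = a * b * q + i * a + j * b} :=
    ⟨(i + t * b, j + (q - t) * a), hrep t⟩
  have hf_inj : f.Injective := fun t t' htt' =>
    Fin.ext <| Nat.eq_of_mul_eq_mul_right (Nat.zero_lt_of_lt hi) <| by
      have := congrArg (·.1.1) htt'
      simp only [f] at this
      omega
  have hf_surj : f.Surjective := by
    rintro ⟨⟨m, n⟩, hmn⟩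
    have hsplit : m % b * a + (m / b * a + n) * b = i * a + (a * q + j) * b := by
      rw [← mul_add_mul_eq_mod_mul_add, hmn]
      ring
    obtain ⟨hm, hn⟩ :=
      eq_and_eq_of_mul_add_mul_eq hab (Nat.mod_lt _ (Nat.zero_lt_of_lt hi)) hi hsplit
    have ht : m / b < q + 1 := by
      by_contra! hq
      nlinarith [Nat.mul_le_mul_right a hq]
    refine ⟨⟨m / b, ht⟩, Subtype.ext (Prod.ext ?_ ?_)⟩
    · simp only [f, ← hm, Nat.mod_add_div' m b]
    · obtain ⟨s, hs⟩ := Nat.exists_eq_add_of_le (Nat.lt_succ_iff.mp ht)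
      simp only [f, hs, Nat.add_sub_cancel_left] at hn ⊢
      nlinarith
  simpa [repCount] using (Nat.card_eq_of_bijective f ⟨hf_inj, hf_surj⟩).symm

end RepCount

/-- For `k ≥ 1`, the set `R_k(a,b)` equals
`{ab(k-1) + i*a + j*b : 0 ≤ i ≤ b-1, 0 ≤ j ≤ a-1}`, and the map
`(i,j) ↦ ab(k-1) + i*a + j*b` is injective on `{0,…,b-1} × {0,…,a-1}`. -/
theorem Rk_eq_structured (a b k : ℕ) (ha : 0 < a) (hb : 0 < b) (hab : Nat.Coprime a b)
    (hk : 1 ≤ k) :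
    {n : ℕ | repCount a b n = k} =
        (fun p : ℕ × ℕ => a * b * (k - 1) + p.1 * a + p.2 * b) '' (Set.Iio b ×ˢ Set.Iio a) ∧
      Set.InjOn (fun p : ℕ × ℕ => a * b * (k - 1) + p.1 * a + p.2 * b)
        (Set.Iio b ×ˢ Set.Iio a) := by
  refine ⟨Set.ext fun n => ⟨fun hn => ?_, ?_⟩, ?_⟩
  · have : Nonempty {p : ℕ × ℕ // p.1 * a + p.2 * b = n} :=
      (Nat.card_pos_iff.mp (by simp only [Set.mem_ofPred_eq, repCount] at hn; omega)).1
    obtain ⟨⟨⟨m, n'⟩, hmn⟩⟩ := this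
    obtain ⟨q, i, j, hi, hj, rfl⟩ := RepCount.exists_eq_of_mul_add_mul_eq ha hb hmn
    have hq : q + 1 = k := by rw [← RepCount.repCount_eq hab hi hj]; exact hn
    exact ⟨(i, j), ⟨hi, hj⟩, by rw [← hq, Nat.add_sub_cancel]⟩
  · rintro ⟨⟨i, j⟩, ⟨hi, hj⟩, rfl⟩
    simp only [Set.mem_ofPred_eq, RepCount.repCount_eq hab hi hj]
    omega
  · rintro ⟨i, j⟩ ⟨hi, hj⟩ ⟨i', j'⟩ ⟨hi', hj'⟩ h
    simp only [add_assoc, Nat.add_left_cancel_iff] at h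
    obtain ⟨rfl, rfl⟩ := RepCount.eq_and_eq_of_mul_add_mul_eq hab hi hi' h
    rfl
end

section
/- Let a and b be coprime positive integers and k ≥ 1. Then (k+1)ab - a - b is the greatest element of R_k(a,b); that is, (k+1)ab - a - b has exactly k representations in the form ma + nb with m, n ∈ ℕ, and every integer with exactly k such representations is at most (k+1)ab - a - b. -/
/-- For `k ≥ 1`, the number `(k+1)ab - a - b` is the greatest integer having exactly `k`
representations in the form `m*a + n*b` with `m, n : ℕ`. -/
theorem gk_eq (a b k : ℕ) (ha : 0 < a) (hb : 0 < b) (hab : Nat.Coprime a b) (hk : 1 ≤ k) :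
    IsGreatest {j : ℕ | repCount a b j = k} ((k + 1) * a * b - a - b) := by
  set N := (k + 1) * a * b - a - b with hN
  have hb1 : b ≤ a * b := Nat.le_mul_of_pos_left b ha
  have ha1 : a ≤ a * b := Nat.le_mul_of_pos_right a hb
  have hassoc : (k + 1) * a * b = (k + 1) * (a * b) := by ring
  have hM : a + b ≤ (k + 1) * a * b := by
    have h2 : 2 * (a * b) ≤ (k + 1) * (a * b) := Nat.mul_le_mul_right _ (by omega)
    omega
  -- key characterization of representations of N
  have key : ∀ m n : ℕ, m * a + n * b = N ↔ (m + 1) * a + (n + 1) * b = (k + 1) * a * b := by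
    intro m n
    have e1 : (m + 1) * a = m * a + a := by ring
    have e2 : (n + 1) * b = n * b + b := by ring
    omega
  constructor
  · -- membership: repCount a b N = k
    show repCount a b N = k
    rw [repCount]
    have hprop : ∀ t : Fin k,
        ((((t : ℕ) + 1) * b - 1) * a + ((k - (t : ℕ)) * a - 1) * b = N) := by
      intro t
      have ht : (t : ℕ) < k := t.isLt
      rw [key]
      have h1 : 1 ≤ ((t : ℕ) + 1) * b := Nat.one_le_iff_ne_zero.2 (by positivity)
      have h2 : 1 ≤ (k - (t : ℕ)) * a := Nat.one_le_iff_ne_zero.2 (by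
        have : 0 < k - (t : ℕ) := by omega
        positivity)
      have e1 : ((t : ℕ) + 1) * b - 1 + 1 = ((t : ℕ) + 1) * b := by omega
      have e2 : (k - (t : ℕ)) * a - 1 + 1 = (k - (t : ℕ)) * a := by omega
      rw [e1, e2]
      obtain ⟨d, hd⟩ := Nat.exists_eq_add_of_le (Nat.le_of_lt ht)
      have h3 : k - (t : ℕ) = d := by omega
      rw [h3]
      have h4 : ((t : ℕ) + 1) * b * a + d * a * b = ((t : ℕ) + d + 1) * a * b := by ring
      rw [h4, ← hd]
    have hbij : Function.Bijective (fun t : Fin k =>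
        (⟨((((t : ℕ) + 1) * b - 1), ((k - (t : ℕ)) * a - 1)), hprop t⟩ :
          {p : ℕ × ℕ // p.1 * a + p.2 * b = N})) := by
      constructor
      · intro t1 t2 h
        simp only [Subtype.mk.injEq, Prod.mk.injEq] at h
        obtain ⟨h1, -⟩ := h
        have hb1' : 1 ≤ ((t1 : ℕ) + 1) * b := Nat.one_le_iff_ne_zero.2 (by positivity)
        have hb2' : 1 ≤ ((t2 : ℕ) + 1) * b := Nat.one_le_iff_ne_zero.2 (by positivity)
        have h2 : ((t1 : ℕ) + 1) * b = ((t2 : ℕ) + 1) * b := by omega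
        have h3 : (t1 : ℕ) + 1 = (t2 : ℕ) + 1 := Nat.eq_of_mul_eq_mul_right hb h2
        exact Fin.ext (by omega)
      · rintro ⟨⟨m, n⟩, hp⟩
        have hp' : m * a + n * b = N := hp
        rw [key] at hp'
        have hdvd : b ∣ (m + 1) * a := by
          have h1 : b ∣ (k + 1) * a * b := Dvd.intro_left _ rfl
          have h2 : b ∣ (n + 1) * b := Dvd.intro_left _ rfl
          have h3 : (m + 1) * a = (k + 1) * a * b - (n + 1) * b := by omega
          rw [h3]; exact Nat.dvd_sub h1 h2
        obtain ⟨s, hs⟩ := hab.symm.dvd_of_dvd_mul_right hdvd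
        have hs1 : 1 ≤ s := by
          rcases Nat.eq_zero_or_pos s with h | h
          · subst h; rw [mul_zero] at hs; omega
          · exact h
        have hcan : s * a + (n + 1) = (k + 1) * a := by
          have e : (s * a + (n + 1)) * b = ((k + 1) * a) * b := by
            calc (s * a + (n + 1)) * b = (b * s) * a + (n + 1) * b := by ring
            _ = (m + 1) * a + (n + 1) * b := by rw [← hs]
            _ = (k + 1) * a * b := hp'
            _ = ((k + 1) * a) * b := by ring
          exact Nat.eq_of_mul_eq_mul_right hb e
        have hsk : s ≤ k := by
          by_contra hcon
          have h4 : k + 1 ≤ s := by omega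
          have h5 := Nat.mul_le_mul_right a h4
          omega
        refine ⟨⟨s - 1, by omega⟩, ?_⟩
        have hfst : ((s - 1 : ℕ) + 1) * b - 1 = m := by
          have h6 : (s - 1 : ℕ) + 1 = s := by omega
          rw [h6, mul_comm]
          omega
        have hsnd : (k - (s - 1 : ℕ)) * a - 1 = n := by
          obtain ⟨d, hd⟩ := Nat.exists_eq_add_of_le hsk
          have h1 : k - (s - 1) = d + 1 := by omega
          rw [h1]
          have h2 : (d + 1) * a = n + 1 := by
            have e : (k + 1) * a = s * a + (d + 1) * a := by rw [hd]; ring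
            omega
          omega
        apply Subtype.ext
        show ((((s - 1 : ℕ) + 1) * b - 1), ((k - (s - 1 : ℕ)) * a - 1)) = (m, n)
        rw [Prod.mk.injEq]
        exact ⟨hfst, hsnd⟩
    rw [Nat.card_congr (Equiv.ofBijective _ hbij).symm]
    simp
  · -- upper bound
    rintro j hj
    simp only [Set.mem_setOf_eq, repCount] at hj
    have hpos : 0 < Nat.card {p : ℕ × ℕ // p.1 * a + p.2 * b = j} := by omega
    obtain ⟨hne, hfin⟩ := Nat.card_pos_iff.mp hpos
    obtain ⟨⟨m, n⟩, hmn⟩ := hne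
    have hmn' : m * a + n * b = j := hmn
    -- normalize to a representation with first coordinate < b
    set m0 := m % b with hm0
    set q := m / b with hq
    have hmod : m0 < b := Nat.mod_lt _ hb
    have hmdiv : m0 + q * b = m := by rw [hm0, hq]; exact Nat.mod_add_div' m b
    set n0 := n + q * a with hn0
    have hrep : m0 * a + n0 * b = j := by
      have e1 : m * a = m0 * a + q * b * a := by rw [← hmdiv]; ring
      have e2 : n0 * b = n * b + q * a * b := by rw [hn0]; ring
      have e3 : q * b * a = q * a * b := by ring
      omega
    by_cases hcase : n0 + 1 ≤ k * a
    · -- then j ≤ N directly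
      have h1 : (m0 + 1) * a ≤ b * a := Nat.mul_le_mul_right _ (by omega)
      have h2 : (n0 + 1) * b ≤ k * a * b := Nat.mul_le_mul_right _ hcase
      have e1 : (m0 + 1) * a = m0 * a + a := by ring
      have e2 : (n0 + 1) * b = n0 * b + b := by ring
      have e3 : b * a + k * a * b = (k + 1) * a * b := by ring
      omega
    · -- contradiction: at least k+1 representations
      exfalso
      have hka : k * a ≤ n0 := by omega
      have gprop : ∀ t : Fin (k + 1),
          (m0 + (t : ℕ) * b) * a + (n0 - (t : ℕ) * a) * b = j := by
        intro t
        have ht : (t : ℕ) ≤ k := by omega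
        have hta : (t : ℕ) * a ≤ n0 := le_trans (Nat.mul_le_mul_right a ht) hka
        have e1 : (m0 + (t : ℕ) * b) * a = m0 * a + (t : ℕ) * b * a := by ring
        have e2 : (n0 - (t : ℕ) * a) * b = n0 * b - (t : ℕ) * a * b := by
          rw [Nat.sub_mul]
        have e3 : (t : ℕ) * a * b ≤ n0 * b := Nat.mul_le_mul_right _ hta
        have e4 : (t : ℕ) * b * a = (t : ℕ) * a * b := by ring
        omega
      have hinj : Function.Injective (fun t : Fin (k + 1) =>
          (⟨(m0 + (t : ℕ) * b, n0 - (t : ℕ) * a), gprop t⟩ :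
            {p : ℕ × ℕ // p.1 * a + p.2 * b = j})) := by
        intro t1 t2 h
        simp only [Subtype.mk.injEq, Prod.mk.injEq] at h
        obtain ⟨h1, -⟩ := h
        have h2 : (t1 : ℕ) * b = (t2 : ℕ) * b := by omega
        exact Fin.ext (Nat.eq_of_mul_eq_mul_right hb h2)
      have hle := Nat.card_le_card_of_injective _ hinj
      simp only [Nat.card_eq_fintype_card, Fintype.card_fin] at hle
      omega
end

section
/- Let a and b be coprime positive integers and k ≥ 1. Then the set R_k(a,b) of nonnegative integers with exactly k representations in the form ma + nb (m, n ∈ ℕ) is finite and has exactly ab elements. -/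
/-- Representations counted by the first coordinate only. -/
def repF (a b j : ℕ) : Finset ℕ :=
  (Finset.range (j + 1)).filter (fun m => m * a ≤ j ∧ b ∣ (j - m * a))

lemma mem_repF {a b j m : ℕ} :
    m ∈ repF a b j ↔ m < j + 1 ∧ m * a ≤ j ∧ b ∣ (j - m * a) := by
  simp [repF, Finset.mem_filter, Finset.mem_range, and_assoc]

lemma repCount_eq (a b j : ℕ) (ha : 0 < a) (hb : 0 < b) :
    repCount a b j = (repF a b j).card := by
  have e : {p : ℕ × ℕ // p.1 * a + p.2 * b = j} ≃ {m // m ∈ repF a b j} :=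
  { toFun := fun p => ⟨p.1.1, by
      obtain ⟨⟨m, n⟩, h⟩ := p
      simp only at h ⊢
      have h1 : m * a ≤ j := by omega
      have h2 : m ≤ m * a := Nat.le_mul_of_pos_right m ha
      refine mem_repF.mpr ⟨by omega, h1, ⟨n, by rw [Nat.mul_comm b n]; omega⟩⟩⟩
    invFun := fun m => ⟨(m.1, (j - m.1 * a) / b), by
      obtain ⟨m, hm⟩ := m
      obtain ⟨h1, h2, h3⟩ := mem_repF.mp hm
      simp only
      have := Nat.div_mul_cancel h3
      omega⟩
    left_inv := by
      rintro ⟨⟨m, n⟩, h⟩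
      simp only at h
      ext
      · rfl
      · show (j - m * a) / b = n
        have : j - m * a = n * b := by omega
        rw [this, Nat.mul_div_cancel _ hb]
    right_inv := by
      rintro ⟨m, hm⟩
      rfl }
  rw [repCount, Nat.card_congr e, Nat.card_eq_fintype_card, Fintype.card_coe]

lemma repF_card_add (a b j : ℕ) (ha : 0 < a) (hb : 0 < b) (hab : Nat.Coprime a b) :
    (repF a b (j + a * b)).card = (repF a b j).card + 1 := by
  haveI : NeZero b := ⟨hb.ne'⟩
  set m0 : ℕ := ((j : ZMod b) * (a : ZMod b)⁻¹).val with hm0def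
  have hm0b : m0 < b := ZMod.val_lt _
  have hunit : IsUnit (a : ZMod b) := (ZMod.isUnit_iff_coprime a b).mpr hab
  have hinv : (a : ZMod b)⁻¹ * (a : ZMod b) = 1 := ZMod.inv_mul_of_unit _ hunit
  have hm0cast : ((m0 : ℕ) : ZMod b) = (j : ZMod b) * (a : ZMod b)⁻¹ := by
    rw [hm0def, ZMod.natCast_val, ZMod.cast_id]
  have hco : b * a = a * b := Nat.mul_comm b a
  have hm0a : m0 * a ≤ a * b := by
    have : m0 * a < b * a := Nat.mul_lt_mul_of_lt_of_le hm0b le_rfl ha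
    omega
  -- the key cast lemma: for m with m * a ≤ j + a * b,
  -- b ∣ j + a * b - m * a ↔ (m : ZMod b) * a = j
  have key : ∀ m : ℕ, m * a ≤ j + a * b →
      (b ∣ (j + a * b - m * a) ↔ ((m : ZMod b) * a = (j : ZMod b))) := by
    intro m hm
    have hb0 : ((b : ℕ) : ZMod b) = 0 := ZMod.natCast_self b
    constructor
    · intro hdvd
      have h0 : ((j + a * b - m * a : ℕ) : ZMod b) = 0 :=
        (ZMod.natCast_eq_zero_iff _ _).mpr hdvd
      rw [Nat.cast_sub hm] at h0
      push_cast at h0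
      rw [hb0] at h0
      linear_combination -h0
    · intro hEq
      refine (ZMod.natCast_eq_zero_iff _ _).mp ?_
      rw [Nat.cast_sub hm]
      push_cast
      rw [hb0]
      linear_combination -hEq
  have hm0dvd : b ∣ (j + a * b - m0 * a) := by
    rw [key m0 (by omega)]
    rw [hm0cast, mul_assoc, hinv, mul_one]
  have huniq : ∀ m : ℕ, m < b → b ∣ (j + a * b - m * a) → m = m0 := by
    intro m hmb hdvd
    have hma : m * a ≤ j + a * b := by
      have : m * a < b * a := Nat.mul_lt_mul_of_lt_of_le hmb le_rfl ha
      omega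
    have h1 : ((m : ℕ) : ZMod b) * a = (j : ZMod b) := (key m hma).mp hdvd
    have h2 : ((m : ℕ) : ZMod b) = (j : ZMod b) * (a : ZMod b)⁻¹ := by
      calc ((m : ℕ) : ZMod b) = ((m : ZMod b) * a) * (a : ZMod b)⁻¹ := by
            rw [mul_assoc, mul_comm (a : ZMod b), hinv, mul_one]
        _ = (j : ZMod b) * (a : ZMod b)⁻¹ := by rw [h1]
    calc m = ((m : ZMod b)).val := (ZMod.val_cast_of_lt hmb).symm
      _ = ((m0 : ZMod b)).val := by rw [h2, hm0cast]
      _ = m0 := ZMod.val_cast_of_lt hm0b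
  have hset : repF a b (j + a * b) = insert m0 ((repF a b j).image (· + b)) := by
    ext m
    rw [Finset.mem_insert, Finset.mem_image, mem_repF]
    constructor
    · rintro ⟨h1, h2, h3⟩
      by_cases hmb : m < b
      · exact Or.inl (huniq m hmb h3)
      · right
        push_neg at hmb
        have hsub : (m - b) * a = m * a - b * a := by rw [Nat.sub_mul]
        have hba : b * a ≤ m * a := Nat.mul_le_mul_right a hmb
        refine ⟨m - b, mem_repF.mpr ⟨?_, ?_, ?_⟩, by omega⟩
        · have hle : (m - b) ≤ (m - b) * a := Nat.le_mul_of_pos_right _ ha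
          omega
        · omega
        · have : j - (m - b) * a = j + a * b - m * a := by omega
          rw [this]; exact h3
    · rintro (rfl | ⟨m', hm', rfl⟩)
      · have : m0 ≤ m0 * a := Nat.le_mul_of_pos_right _ ha
        exact ⟨by omega, by omega, hm0dvd⟩
      · obtain ⟨h1, h2, h3⟩ := mem_repF.mp hm'
        have hsub : (m' + b) * a = m' * a + b * a := by rw [Nat.add_mul]
        have hbb : b ≤ b * a := Nat.le_mul_of_pos_right b ha
        refine ⟨by omega, by omega, ?_⟩
        have : j + a * b - (m' + b) * a = j - m' * a := by omega
        rw [this]; exact h3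
  have hnot : m0 ∉ (repF a b j).image (· + b) := by
    simp only [Finset.mem_image, not_exists, not_and]
    intro x hx hcontra
    omega
  rw [hset, Finset.card_insert_of_notMem hnot,
    Finset.card_image_of_injective _ (add_left_injective b)]

lemma repF_card_le_one (a b j : ℕ) (ha : 0 < a) (hb : 0 < b) (hab : Nat.Coprime a b)
    (hj : j < a * b) : (repF a b j).card ≤ 1 := by
  rw [Finset.card_le_one]
  intro x hx y hy
  obtain ⟨hx1, hx2, hx3⟩ := mem_repF.mp hx
  obtain ⟨hy1, hy2, hy3⟩ := mem_repF.mp hy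
  -- wlog-style: a symmetric argument
  have main : ∀ u v : ℕ, u ≤ v → v * a ≤ j → u * a ≤ j →
      b ∣ (j - u * a) → b ∣ (j - v * a) → u = v := by
    intro u v huv hva hua hdu hdv
    have hd : b ∣ (j - u * a) - (j - v * a) := Nat.dvd_sub hdu hdv
    have hle : u * a ≤ v * a := Nat.mul_le_mul_right a huv
    have heq : (j - u * a) - (j - v * a) = (v - u) * a := by
      rw [Nat.sub_mul]; omega
    rw [heq] at hd
    have hbd : b ∣ (v - u) := (Nat.Coprime.dvd_of_dvd_mul_right hab.symm) hd
    obtain ⟨c, hc⟩ := hbd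
    rcases Nat.eq_zero_or_pos c with rfl | hc0
    · omega
    · exfalso
      have hvb : b ≤ v := by
        have : b ≤ b * c := Nat.le_mul_of_pos_right b hc0
        omega
      have h5 : b * a ≤ v * a := Nat.mul_le_mul_right a hvb
      have hco : b * a = a * b := Nat.mul_comm b a
      omega
  rcases le_total x y with h | h
  · exact main x y h hy2 hx2 hx3 hy3
  · exact (main y x h hx2 hy2 hy3 hx3).symm

lemma repF_card_add_mul (a b c t : ℕ) (ha : 0 < a) (hb : 0 < b) (hab : Nat.Coprime a b) :
    (repF a b (c + t * (a * b))).card = (repF a b c).card + t := by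
  induction t with
  | zero => simp
  | succ n ih =>
    have h : c + (n + 1) * (a * b) = (c + n * (a * b)) + a * b := by ring
    rw [h, repF_card_add a b _ ha hb hab, ih]
    omega

/-- For `k ≥ 1`, the set `R_k(a,b)` of integers with exactly `k` representations is
finite with exactly `a*b` elements. -/
theorem ck_eq (a b k : ℕ) (ha : 0 < a) (hb : 0 < b) (hab : Nat.Coprime a b) (hk : 1 ≤ k) :
    {j : ℕ | repCount a b j = k}.Finite ∧ {j : ℕ | repCount a b j = k}.ncard = a * b := by
  have hab0 : 0 < a * b := Nat.mul_pos ha hb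
  set g : ℕ → ℕ := fun c => c + (k - (repF a b c).card) * (a * b) with hg
  have hset : {j : ℕ | repCount a b j = k} = ↑((Finset.range (a * b)).image g) := by
    ext j
    simp only [Set.mem_setOf_eq, Finset.coe_image, Set.mem_image, Finset.mem_coe,
      Finset.mem_range]
    constructor
    · intro hj
      set c := j % (a * b) with hc
      set t := j / (a * b) with ht
      have hclt : c < a * b := Nat.mod_lt _ hab0
      have hj' : j = c + t * (a * b) := (Nat.mod_add_div' j (a * b)).symm
      clear_value c t
      rw [repCount_eq a b j ha hb, hj', repF_card_add_mul a b c t ha hb hab] at hj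
      refine ⟨c, hclt, ?_⟩
      rw [hg]
      simp only
      rw [show k - (repF a b c).card = t by omega]
      exact hj'.symm
    · rintro ⟨c, hc, rfl⟩
      have h1 : (repF a b c).card ≤ 1 := repF_card_le_one a b c ha hb hab hc
      rw [hg]
      simp only
      rw [repCount_eq a b _ ha hb, repF_card_add_mul a b c _ ha hb hab]
      omega
  constructor
  · rw [hset]; exact (Finset.finite_toSet _)
  · rw [hset, Set.ncard_coe_finset]
    rw [Finset.card_image_of_injOn, Finset.card_range]
    intro c hc c' hc' hcc
    simp only [Finset.coe_range, Set.mem_Iio] at hc hc'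
    have h1 : g c % (a * b) = c := by
      rw [hg]; simp only
      rw [Nat.add_mul_mod_self_right, Nat.mod_eq_of_lt hc]
    have h2 : g c' % (a * b) = c' := by
      rw [hg]; simp only
      rw [Nat.add_mul_mod_self_right, Nat.mod_eq_of_lt hc']
    rw [← h1, ← h2, hcc]
end

section
/- Let a and b be coprime positive integers and k ≥ 1. Then the sum of all elements of R_k(a,b) equals (1/2)·ab·(2abk - a - b); that is, 2·∑_{j ∈ R_k(a,b)} j = ab(2abk - a - b). -/
open Finset

def normalForm (a b m s t : ℕ) : ℕ := m * a + s * b + t * (a * b)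

theorem mul_add_mul_eq_normalForm (a b m n : ℕ) :
    m * a + n * b = normalForm a b (m % b) (n % a) (m / b + n / a) := by
  nth_rewrite 1 [← Nat.mod_add_div m b, ← Nat.mod_add_div n a]
  rw [normalForm]
  ring

section

variable {a b : ℕ}

theorem eq_of_mul_add_mul_eq_of_coprime (hab : a.Coprime b) {m m' x y : ℕ} (hm : m < b)
    (hm' : m' < b) (h : m * a + x * b = m' * a + y * b) : m = m' := by
  have hmod : m * a ≡ m' * a [MOD b] := by
    simpa [Nat.ModEq, Nat.add_mul_mod_self_right] using congrArg (· % b) h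
  exact (Nat.ModEq.cancel_right_of_coprime hab.symm hmod).eq_of_lt_of_lt hm hm'

theorem normalForm_inj (hab : a.Coprime b) {m s t m' s' t' : ℕ} (hm : m < b) (hs : s < a)
    (hm' : m' < b) (hs' : s' < a) (h : normalForm a b m s t = normalForm a b m' s' t') :
    m = m' ∧ s = s' ∧ t = t' := by
  rw [normalForm, normalForm] at h
  have hm_eq : m = m' :=
    eq_of_mul_add_mul_eq_of_coprime hab (x := s + t * a) (y := s' + t' * a) hm hm' (by linarith)
  have hs_eq : s = s' :=
    eq_of_mul_add_mul_eq_of_coprime hab.symm (x := m + t * b) (y := m' + t' * b) hs hs'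
      (by linarith)
  subst hm_eq hs_eq
  have hab_pos : 0 < a * b := Nat.mul_pos (by omega) (by omega)
  exact ⟨rfl, rfl, Nat.eq_of_mul_eq_mul_right hab_pos (by omega)⟩

theorem mod_div_of_mul_add_mul_eq_normalForm (hab : a.Coprime b) {m n m₀ s t : ℕ}
    (hm₀ : m₀ < b) (hs : s < a) (h : m * a + n * b = normalForm a b m₀ s t) :
    m % b = m₀ ∧ n % a = s ∧ m / b + n / a = t := by
  rw [mul_add_mul_eq_normalForm a b m n] at h
  exact normalForm_inj hab (Nat.mod_lt _ (by omega)) (Nat.mod_lt _ (by omega)) hm₀ hs h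

def repNormalFormEquiv (hab : a.Coprime b) {m₀ s : ℕ} (t : ℕ) (hm₀ : m₀ < b) (hs : s < a) :
    {p : ℕ × ℕ // p.1 * a + p.2 * b = normalForm a b m₀ s t} ≃ Fin (t + 1) where
  toFun p := ⟨p.1.1 / b, Nat.lt_succ_of_le <|
    Nat.le.intro (mod_div_of_mul_add_mul_eq_normalForm hab hm₀ hs p.2).2.2⟩
  invFun i := ⟨(m₀ + i * b, s + (t - i) * a), by
    have hi : (i : ℕ) ≤ t := Nat.lt_succ_iff.mp i.2
    rw [normalForm]
    zify [hi]
    ring⟩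
  left_inv := by
    rintro ⟨⟨m, n⟩, h⟩
    dsimp only at h
    obtain ⟨hm, hn, ht⟩ := mod_div_of_mul_add_mul_eq_normalForm hab hm₀ hs h
    have hn_div : t - m / b = n / a := (Nat.eq_sub_of_add_eq' ht).symm
    ext
    · simp only
      rw [← hm, Nat.mod_add_div']
    · simp only
      rw [hn_div, ← hn, Nat.mod_add_div']
  right_inv i := by
    ext
    simp [Nat.add_mul_div_right _ _ (show 0 < b by omega), Nat.div_eq_of_lt hm₀]

theorem repCount_normalForm (hab : a.Coprime b) {m₀ s : ℕ} (t : ℕ) (hm₀ : m₀ < b)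
    (hs : s < a) : repCount a b (normalForm a b m₀ s t) = t + 1 := by
  rw [repCount, Nat.card_congr (repNormalFormEquiv hab t hm₀ hs), Nat.card_eq_fintype_card,
    Fintype.card_fin]

theorem setOf_repCount_eq_succ (ha : 0 < a) (hb : 0 < b) (hab : a.Coprime b) (k : ℕ) :
    {j | repCount a b j = k + 1} =
      ((range b ×ˢ range a).image fun p : ℕ × ℕ => normalForm a b p.1 p.2 k : Set ℕ) := by
  ext j
  simp only [Set.mem_ofPred_eq, coe_image, Set.mem_image, mem_coe, mem_product, mem_range]
  constructor
  · intro hj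
    obtain ⟨⟨⟨m, n⟩, hmn⟩⟩ : Nonempty {p : ℕ × ℕ // p.1 * a + p.2 * b = j} :=
      (Nat.card_ne_zero.mp (by rw [← repCount, hj]; omega)).1
    rw [← hmn, mul_add_mul_eq_normalForm] at hj ⊢
    rw [repCount_normalForm hab _ (Nat.mod_lt m hb) (Nat.mod_lt n ha), Nat.succ_inj] at hj
    exact ⟨(m % b, n % a), ⟨Nat.mod_lt m hb, Nat.mod_lt n ha⟩, by rw [hj]⟩
  · rintro ⟨⟨m₀, s⟩, ⟨hm₀, hs⟩, rfl⟩
    exact repCount_normalForm hab k hm₀ hs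

theorem injOn_normalForm (hab : a.Coprime b) (k : ℕ) :
    Set.InjOn (fun p : ℕ × ℕ => normalForm a b p.1 p.2 k) ↑(range b ×ˢ range a) := by
  rintro ⟨m, s⟩ hp ⟨m', s'⟩ hp' h
  simp only [coe_product, coe_range, Set.mem_prod, Set.mem_Iio] at hp hp'
  obtain ⟨rfl, rfl, -⟩ := normalForm_inj hab hp.1 hp.2 hp'.1 hp'.2 h
  rfl

end

theorem two_mul_sum_normalForm (a b k : ℕ) :
    2 * ∑ p ∈ range b ×ˢ range a, normalForm a b p.1 p.2 k =
      a * b * ((b - 1) * a + (a - 1) * b + 2 * k * (a * b)) := by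
  rw [sum_product]
  simp only [normalForm, sum_add_distrib, sum_const, card_range, smul_eq_mul, ← sum_mul]
  rw [← mul_sum, ← sum_mul]
  calc _ = a * a * ((∑ i ∈ range b, i) * 2) + b * b * ((∑ i ∈ range a, i) * 2)
        + 2 * (b * (a * (k * (a * b)))) := by ring
    _ = _ := by rw [sum_range_id_mul_two, sum_range_id_mul_two]; ring

/-- For `k ≥ 1`, twice the sum of all elements of `R_k(a,b)` equals
`ab * (2abk - a - b)`. -/
theorem sk_eq (a b k : ℕ) (ha : 0 < a) (hb : 0 < b) (hab : Nat.Coprime a b) (hk : 1 ≤ k) :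
    2 * (∑ᶠ j ∈ {j : ℕ | repCount a b j = k}, j) = a * b * (2 * a * b * k - a - b) := by
  obtain ⟨k, rfl⟩ := Nat.exists_eq_add_of_le' hk
  rw [setOf_repCount_eq_succ ha hb hab, finsum_mem_coe_finset, sum_image (injOn_normalForm hab k),
    two_mul_sum_normalForm]
  obtain ⟨a, rfl⟩ : ∃ a', a = a' + 1 := ⟨a - 1, by omega⟩
  obtain ⟨b, rfl⟩ : ∃ b', b = b' + 1 := ⟨b - 1, by omega⟩
  congr 1
  rw [Nat.sub_sub, Nat.add_sub_cancel, Nat.add_sub_cancel]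
  symm
  apply Nat.sub_eq_of_eq_add
  ring
end

section
/- Let a and b be coprime positive integers. Then the set R_0(a,b) of nonnegative integers not representable as ma + nb with m, n ∈ ℕ is finite of cardinality (a-1)(b-1)/2; that is, 2·|R_0(a,b)| = (a-1)(b-1). -/
/-- `j` is representable as `m*a + n*b`. -/
def SRep (a b j : ℕ) : Prop := ∃ m n : ℕ, m * a + n * b = j

lemma repCount_eq_zero_iff {a b : ℕ} (ha : 0 < a) (hb : 0 < b) (j : ℕ) :
    repCount a b j = 0 ↔ ¬ SRep a b j := by
  have hfin : Finite {p : ℕ × ℕ // p.1 * a + p.2 * b = j} := by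
    have hsub : {p : ℕ × ℕ | p.1 * a + p.2 * b = j} ⊆ Set.Iic (j, j) := by
      rintro ⟨m, n⟩ h
      simp only [Set.mem_setOf_eq] at h
      simp only [Set.mem_Iic, Prod.mk_le_mk]
      constructor <;> nlinarith
    exact ((Set.finite_Iic ((j, j) : ℕ × ℕ)).subset hsub).to_subtype
  rw [repCount, Nat.card_eq_zero]
  constructor
  · rintro (h | h)
    · rintro ⟨m, n, hmn⟩
      exact h.false ⟨(m, n), hmn⟩
    · exact absurd hfin (@not_finite _ h)
  · intro h
    left
    exact ⟨fun ⟨⟨m, n⟩, hmn⟩ => h ⟨m, n, hmn⟩⟩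

lemma srep_of {a b : ℕ} {j m : ℕ} (h1 : m * a ≤ j) (h2 : m * a % b = j % b) :
    SRep a b j := by
  have hd : b ∣ j - m * a := (Nat.modEq_iff_dvd' h1).mp h2
  refine ⟨m, (j - m * a) / b, ?_⟩
  rw [Nat.div_mul_cancel hd]
  omega

lemma mval_spec {a b : ℕ} (hb : 0 < b) (hab : Nat.Coprime a b) (j : ℕ) :
    ∃ m, m < b ∧ m * a % b = j % b := by
  haveI : NeZero b := ⟨hb.ne'⟩
  set u := ZMod.unitOfCoprime a hab with hu
  refine ⟨((j : ZMod b) * ↑u⁻¹).val, ZMod.val_lt _, ?_⟩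
  have key : ((((j : ZMod b) * ↑u⁻¹).val * a : ℕ) : ZMod b) = (j : ZMod b) := by
    push_cast
    rw [ZMod.natCast_val, ZMod.cast_id]
    have ha' : (a : ZMod b) = ↑u := (ZMod.coe_unitOfCoprime a hab).symm
    rw [ha', mul_assoc, Units.inv_mul, mul_one]
  exact (ZMod.natCast_eq_natCast_iff _ _ _).mp key

lemma hN_facts {a b : ℕ} (ha2 : 2 ≤ a) (hb2 : 2 ≤ b) :
    (a * b - a - b) + a + b = a * b ∧ (b - 1) * a = (a * b - a - b) + b ∧
      (a * b - a - b) + 1 = (a - 1) * (b - 1) := by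
  obtain ⟨A, rfl⟩ : ∃ A, a = A + 1 := ⟨a - 1, by omega⟩
  obtain ⟨B, rfl⟩ : ∃ B, b = B + 1 := ⟨b - 1, by omega⟩
  have h1 : (A + 1) * (B + 1) = A * B + A + B + 1 := by ring
  have h2 : (B + 1 - 1) * (A + 1) = A * B + B := by
    simp only [Nat.add_sub_cancel]; ring
  have h3 : (A + 1 - 1) * (B + 1 - 1) = A * B := by simp
  have h4 : 1 ≤ A * B := Nat.mul_pos (by omega) (by omega)
  rw [h1, h2, h3]
  set P := A * B with hP
  omega

lemma notrep_le {a b : ℕ} (ha2 : 2 ≤ a) (hb2 : 2 ≤ b) (hab : Nat.Coprime a b)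
    {j : ℕ} (h : ¬ SRep a b j) : j ≤ a * b - a - b := by
  obtain ⟨hN, hba, -⟩ := hN_facts ha2 hb2
  obtain ⟨m, hm, hmod⟩ := mval_spec (by omega : 0 < b) hab j
  have hgt : j < m * a := by
    by_contra h'
    push_neg at h'
    exact h (srep_of h' hmod)
  have hdvd : b ∣ m * a - j := (Nat.modEq_iff_dvd' hgt.le).mp hmod.symm
  have hge : b ≤ m * a - j := Nat.le_of_dvd (by omega) hdvd
  have hle : m * a ≤ (b - 1) * a := Nat.mul_le_mul_right a (by omega)
  rw [hba] at hle
  set Y := m * a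
  omega

lemma not_both {a b : ℕ} (ha : 0 < a) (hb : 0 < b) (hab : Nat.Coprime a b)
    {j : ℕ} (hj : j ≤ a * b - a - b) (hN : (a * b - a - b) + a + b = a * b) :
    ¬ (SRep a b j ∧ SRep a b (a * b - a - b - j)) := by
  rintro ⟨⟨m1, n1, h1⟩, ⟨m2, n2, h2⟩⟩
  have hsum : (m1 + m2 + 1) * a + (n1 + n2 + 1) * b = a * b := by
    have e : (m1 + m2 + 1) * a + (n1 + n2 + 1) * b
        = (m1 * a + n1 * b) + (m2 * a + n2 * b) + a + b := by ring
    rw [e, h1, h2]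
    omega
  have hda : a ∣ (n1 + n2 + 1) * b := by
    have h' : a ∣ (m1 + m2 + 1) * a + (n1 + n2 + 1) * b := hsum ▸ dvd_mul_right a b
    exact (Nat.dvd_add_right (dvd_mul_left a _)).mp h'
  have hdb : b ∣ (m1 + m2 + 1) * a := by
    have h' : b ∣ (m1 + m2 + 1) * a + (n1 + n2 + 1) * b := hsum ▸ dvd_mul_left b a
    rw [add_comm] at h'
    exact (Nat.dvd_add_right (dvd_mul_left b _)).mp h'
  have hda' : a ≤ n1 + n2 + 1 :=
    Nat.le_of_dvd (by omega) (hab.dvd_of_dvd_mul_right hda)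
  have hdb' : b ≤ m1 + m2 + 1 :=
    Nat.le_of_dvd (by omega) (hab.symm.dvd_of_dvd_mul_right hdb)
  nlinarith [Nat.mul_le_mul_right a hdb', Nat.mul_le_mul_right b hda']

lemma one_of {a b : ℕ} (ha2 : 2 ≤ a) (hb2 : 2 ≤ b) (hab : Nat.Coprime a b)
    {j : ℕ} (hj : j ≤ a * b - a - b) (h : ¬ SRep a b j) :
    SRep a b (a * b - a - b - j) := by
  obtain ⟨hN, hba, -⟩ := hN_facts ha2 hb2
  obtain ⟨m, hm, hmod⟩ := mval_spec (by omega : 0 < b) hab j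
  have hgt : j < m * a := by
    by_contra h'
    push_neg at h'
    exact h (srep_of h' hmod)
  have hdvd : b ∣ m * a - j := (Nat.modEq_iff_dvd' hgt.le).mp hmod.symm
  obtain ⟨k, hk⟩ := hdvd
  have hk1 : 1 ≤ k := by
    rcases Nat.eq_zero_or_pos k with rfl | h'
    · simp at hk; omega
    · exact h'
  refine ⟨b - 1 - m, k - 1, ?_⟩
  have e1 : (b - 1 - m) * a + m * a = (b - 1) * a := by
    rw [← add_mul]; congr 1; omega
  have e2 : (k - 1) * b + b = b * k := by
    cases k with
    | zero => omega
    | succ n => simp [Nat.succ_sub_one]; ring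
  generalize hX : (b - 1 - m) * a = X at e1 ⊢
  generalize hZ : (k - 1) * b = Z at e2 ⊢
  generalize hW : b * k = W at e2 hk
  generalize hY : m * a = Y at e1 hk hgt
  generalize hP : (b - 1) * a = P at e1 hba
  generalize hM : a * b = M at hba hN hj ⊢
  omega

/-- Sylvester: the set of nonrepresentable integers is finite of cardinality
`(a-1)(b-1)/2`. -/
theorem c0_eq (a b : ℕ) (ha : 0 < a) (hb : 0 < b) (hab : Nat.Coprime a b) :
    {j : ℕ | repCount a b j = 0}.Finite ∧
      2 * {j : ℕ | repCount a b j = 0}.ncard = (a - 1) * (b - 1) := by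
  classical
  have hset : {j : ℕ | repCount a b j = 0} = {j : ℕ | ¬ SRep a b j} := by
    ext j; exact repCount_eq_zero_iff ha hb j
  by_cases ha1 : a = 1
  · subst ha1
    have hall : ∀ j, SRep 1 b j := fun j => ⟨j, 0, by simp⟩
    have he : {j : ℕ | repCount 1 b j = 0} = ∅ := by
      rw [hset]; ext j; simp [hall j]
    rw [he]
    simp
  by_cases hb1 : b = 1
  · subst hb1
    have hall : ∀ j, SRep a 1 j := fun j => ⟨0, j, by simp⟩
    have he : {j : ℕ | repCount a 1 j = 0} = ∅ := by
      rw [hset]; ext j; simp [hall j]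
    rw [he]
    simp
  have ha2 : 2 ≤ a := by omega
  have hb2 : 2 ≤ b := by omega
  obtain ⟨hN, hba, hN1⟩ := hN_facts ha2 hb2
  set N := a * b - a - b with hNdef
  set Sf : Finset ℕ := (Finset.range (N + 1)).filter (fun j => ¬ SRep a b j) with hSf
  set Tf : Finset ℕ := (Finset.range (N + 1)).filter (fun j => SRep a b j) with hTf
  have hset2 : {j : ℕ | repCount a b j = 0} = ↑Sf := by
    rw [hset]
    ext j
    simp only [hSf, Finset.coe_filter, Finset.mem_range, Set.mem_setOf_eq]
    constructor
    · intro h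
      exact ⟨Nat.lt_succ_of_le (notrep_le ha2 hb2 hab h), h⟩
    · exact fun h => h.2
  have hcards : Tf.card + Sf.card = N + 1 := by
    rw [hSf, hTf, Finset.card_filter_add_card_filter_not, Finset.card_range]
  have hbij : Sf.card = Tf.card := by
    apply Finset.card_bij (fun j _ => N - j)
    · intro j hj
      simp only [hSf, Finset.mem_filter, Finset.mem_range] at hj
      simp only [hTf, Finset.mem_filter, Finset.mem_range]
      exact ⟨by omega, one_of ha2 hb2 hab (by omega) hj.2⟩
    · intro j1 hj1 j2 hj2 hEq
      simp only [hSf, Finset.mem_filter, Finset.mem_range] at hj1 hj2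
      omega
    · intro t ht
      simp only [hTf, Finset.mem_filter, Finset.mem_range] at ht
      refine ⟨N - t, ?_, by omega⟩
      simp only [hSf, Finset.mem_filter, Finset.mem_range]
      refine ⟨by omega, fun hrep => ?_⟩
      have := not_both ha hb hab (j := N - t) (by omega) hN
      have ht' : N - (N - t) = t := by omega
      rw [ht'] at this
      exact this ⟨hrep, ht.2⟩
  rw [hset2]
  refine ⟨Sf.finite_toSet, ?_⟩
  rw [Set.ncard_coe_finset]
  omega
end

section
/- Let a and b be coprime positive integers, k ≥ 1, and m ≥ 0. Then, in ℚ, the m-th power sum over R_k(a,b) satisfies s_k^m(a,b) = ∑_{λ+μ+ν=m} (m!/(λ!·μ!·ν!)) · a^{λ+μ} · b^{λ+ν} · (k-1)^λ · β_{ν+1}(a) · β_{μ+1}(b), where the sum ranges over all triples (λ,μ,ν) of nonnegative integers with λ + μ + ν = m. -/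
/-- `bernoulliBeta n x = (B_n(x) - B_n(0)) / n`, where `B_n` is the `n`-th Bernoulli
polynomial; for `x = N : ℕ` this equals `∑_{j=0}^{N-1} j^(n-1)`. -/
noncomputable def bernoulliBeta (n : ℕ) (x : ℚ) : ℚ :=
  ((Polynomial.bernoulli n).eval x - (Polynomial.bernoulli n).eval 0) / n

/-! Since `a` and `b` are coprime, a representable `J` is uniquely `i * a + n * b` with `i < b`,
and its representations are then `(i + t * b, n - t * a)` for `t ≤ n / a`; so `J` has exactly
`n / a + 1` of them. Hence `R_k(a,b)` is the set of the distinct numbers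
`(k - 1) * a * b + i * a + j * b` with `i < b`, `j < a`, and expanding the `m`-th power of such a
number by the trinomial theorem splits the power sum into the power sums `∑_{i < b} i ^ μ` and
`∑_{j < a} j ^ ν`, which are Bernoulli-polynomial values. -/

open Finset
open scoped Nat

theorem bernoulliBeta_natCast (p N : ℕ) :
    bernoulliBeta (p + 1) N = ∑ i ∈ range N, (i : ℚ) ^ p := by
  rw [bernoulliBeta, Polynomial.bernoulli_eval_zero, ← Polynomial.sum_range_pow_eq_bernoulli_sub]
  push_cast
  field_simp

section Trinomial

variable {K : Type*} [Field K] [CharZero K]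

theorem add_add_pow_eq_sum_antidiagonal (x y z : K) (m : ℕ) :
    (x + y + z) ^ m = ∑ p ∈ antidiagonal m, ∑ q ∈ antidiagonal p.2,
      (m ! : K) / (p.1 ! * q.1 ! * q.2 !) * x ^ p.1 * y ^ q.1 * z ^ q.2 := by
  rw [add_assoc, (Commute.all _ _).add_pow']
  refine sum_congr rfl fun p hp => ?_
  rw [nsmul_eq_mul, (Commute.all _ _).add_pow', mul_sum, mul_sum]
  refine sum_congr rfl fun q hq => ?_
  rw [HasAntidiagonal.mem_antidiagonal] at hp hq
  rw [nsmul_eq_mul, ← hp, ← hq, Nat.cast_add_choose, Nat.cast_add_choose]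
  have : ((q.1 + q.2)! : K) ≠ 0 := Nat.cast_ne_zero.2 (Nat.factorial_ne_zero _)
  field_simp

theorem sum_sum_add_add_pow {ι κ : Type*} (s : Finset ι) (t : Finset κ) (c : K)
    (f : ι → K) (g : κ → K) (m : ℕ) :
    ∑ i ∈ s, ∑ j ∈ t, (c + f i + g j) ^ m = ∑ p ∈ antidiagonal m, ∑ q ∈ antidiagonal p.2,
      (m ! : K) / (p.1 ! * q.1 ! * q.2 !) * c ^ p.1 *
        (∑ i ∈ s, f i ^ q.1) * (∑ j ∈ t, g j ^ q.2) := by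
  simp_rw [add_add_pow_eq_sum_antidiagonal, mul_assoc, sum_mul_sum, mul_sum,
    ← sum_product' s t]
  exact sum_comm.trans (sum_congr rfl fun p _ => sum_comm)

end Trinomial

section Representations

variable {a b : ℕ}

theorem mod_eq_of_mul_add_mul_eq (hab : a.Coprime b) {i m n n' : ℕ} (hi : i < b)
    (h : m * a + n' * b = i * a + n * b) : m % b = i := by
  have hmod : m * a ≡ i * a [MOD b] := by
    simpa [Nat.ModEq, Nat.add_mul_mod_self_right] using congrArg (· % b) h
  rw [← Nat.mod_eq_of_lt hi]
  exact Nat.ModEq.cancel_right_of_coprime hab.symm hmod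

theorem mul_add_mul_inj (hab : a.Coprime b) {i i' n n' : ℕ} (hi : i < b) (hi' : i' < b)
    (h : i * a + n * b = i' * a + n' * b) : i = i' ∧ n = n' := by
  have hii' : i = i' := by rw [← Nat.mod_eq_of_lt hi, mod_eq_of_mul_add_mul_eq hab hi' h]
  subst hii'
  exact ⟨rfl, Nat.eq_of_mul_eq_mul_right (i.zero_le.trans_lt hi) (by omega)⟩

theorem repCount_mul_add_mul (ha : 0 < a) (hab : a.Coprime b) {i : ℕ} (hi : i < b) (n : ℕ) :
    repCount a b (i * a + n * b) = n / a + 1 := by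
  have hb : 0 < b := i.zero_le.trans_lt hi
  have hsol : {p : ℕ × ℕ | p.1 * a + p.2 * b = i * a + n * b} =
      ↑((range (n / a + 1)).image fun t => (i + t * b, n - t * a)) := by
    ext ⟨m, n'⟩
    simp only [Set.mem_ofPred_eq, coe_image, coe_range, Set.mem_image, Set.mem_Iio,
      Prod.mk.injEq, Nat.lt_succ_iff, Nat.le_div_iff_mul_le ha]
    constructor
    · intro h
      have hm : i + m / b * b = m := by
        rw [← mod_eq_of_mul_add_mul_eq hab hi h]; exact Nat.mod_add_div' m b
      have hn : m / b * a + n' = n := by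
        rw [← hm] at h
        exact Nat.eq_of_mul_eq_mul_right hb (by linarith)
      exact ⟨m / b, by omega, hm, by omega⟩
    · rintro ⟨t, ht, rfl, rfl⟩
      zify [ht]
      ring
  rw [repCount, ← Set.coe_ofPred, Nat.card_coe_set_eq, hsol, Set.ncard_coe_finset,
    Finset.card_image_of_injective, card_range]
  intro t t' h
  simpa [hb.ne'] using (Prod.mk.inj h).1

theorem exists_mul_add_mul_eq_of_repCount_pos (hb : 0 < b) {J : ℕ} (h : 0 < repCount a b J) :
    ∃ i < b, ∃ n, i * a + n * b = J := by
  obtain ⟨⟨⟨m, n⟩, hmn⟩⟩ := (Nat.card_pos_iff.1 h).1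
  refine ⟨m % b, Nat.mod_lt m hb, n + m / b * a, ?_⟩
  rw [← hmn]
  conv_rhs => rw [← Nat.mod_add_div' m b]
  ring

theorem setOf_repCount_eq (ha : 0 < a) (hb : 0 < b) (hab : a.Coprime b) {k : ℕ} (hk : 1 ≤ k) :
    {J | repCount a b J = k} =
      ↑((range b ×ˢ range a).image fun p => p.1 * a + (p.2 + (k - 1) * a) * b) := by
  ext J
  simp only [Set.mem_ofPred_eq, coe_image, coe_product, coe_range, Set.mem_image, Set.mem_prod,
    Set.mem_Iio, Prod.exists]
  constructor
  · intro hJ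
    obtain ⟨i, hi, n, rfl⟩ := exists_mul_add_mul_eq_of_repCount_pos hb (hJ ▸ hk)
    rw [repCount_mul_add_mul ha hab hi] at hJ
    refine ⟨i, n % a, ⟨hi, Nat.mod_lt n ha⟩, ?_⟩
    rw [show k - 1 = n / a by omega, Nat.mod_add_div']
  · rintro ⟨i, j, ⟨hi, hj⟩, rfl⟩
    rw [repCount_mul_add_mul ha hab hi, Nat.add_mul_div_right _ _ ha, Nat.div_eq_of_lt hj]
    omega

end Representations

/-- The `m`-th power sum over `R_k(a,b)` equals
`∑_{λ+μ+ν=m} m!/(λ!μ!ν!) a^(λ+μ) b^(λ+ν) (k-1)^λ β_{ν+1}(a) β_{μ+1}(b)`. -/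
theorem power_sum_eq_bernoulli (a b k m : ℕ) (ha : 0 < a) (hb : 0 < b)
    (hab : Nat.Coprime a b) (hk : 1 ≤ k) :
    (∑ᶠ j ∈ {j : ℕ | repCount a b j = k}, (j : ℚ) ^ m) =
      ∑ x ∈ Finset.HasAntidiagonal.antidiagonal m, ∑ y ∈ Finset.HasAntidiagonal.antidiagonal x.2,
        (Nat.factorial m : ℚ) /
            (Nat.factorial x.1 * Nat.factorial y.1 * Nat.factorial y.2) *
          (a : ℚ) ^ (x.1 + y.1) * (b : ℚ) ^ (x.1 + y.2) * ((k : ℚ) - 1) ^ x.1 *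
          bernoulliBeta (y.2 + 1) (a : ℚ) * bernoulliBeta (y.1 + 1) (b : ℚ) := by
  have hinj : Set.InjOn (fun p : ℕ × ℕ => p.1 * a + (p.2 + (k - 1) * a) * b)
      ↑(range b ×ˢ range a) := by
    rintro ⟨i, j⟩ hij ⟨i', j'⟩ hij' h
    simp only [coe_product, coe_range, Set.mem_prod, Set.mem_Iio] at hij hij'
    obtain ⟨rfl, hj⟩ := mul_add_mul_inj hab hij.1 hij'.1 h
    simpa using hj
  have hcast (i j : ℕ) : ((i * a + (j + (k - 1) * a) * b : ℕ) : ℚ) =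
      ((k : ℚ) - 1) * (a * b) + i * a + j * b := by
    push_cast [Nat.cast_sub hk]
    ring
  rw [setOf_repCount_eq ha hb hab hk, finsum_mem_coe_finset, sum_image hinj, sum_product]
  simp_rw [hcast, sum_sum_add_add_pow, bernoulliBeta_natCast, mul_pow, ← sum_mul]
  refine sum_congr rfl fun p _ => sum_congr rfl fun q _ => ?_
  ring
end

section
/- Let a and b be coprime positive integers and k ≥ 0. Then the set of nonnegative integers with at most k representations in the form ma + nb (m, n ∈ ℕ) is finite of cardinality (1/2)(a-1)(b-1) + abk; that is, 2·|ℕ ∖ S_k(a,b)| = (a-1)(b-1) + 2abk. -/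
section aux
variable {a b : ℕ}

lemma rep_finite (ha : 0 < a) (hb : 0 < b) (j : ℕ) :
    Finite {p : ℕ × ℕ // p.1 * a + p.2 * b = j} := by
  apply Finite.of_injective (fun p : {p : ℕ × ℕ // p.1 * a + p.2 * b = j} =>
    ((⟨p.1.1, by
        have h1 : p.1.1 ≤ p.1.1 * a := Nat.le_mul_of_pos_right _ ha
        omega⟩ : Fin (j+1)),
     (⟨p.1.2, by
        have h1 : p.1.2 ≤ p.1.2 * b := Nat.le_mul_of_pos_right _ hb
        have := p.2
        omega⟩ : Fin (j+1))))
  rintro ⟨⟨x1, x2⟩, hx⟩ ⟨⟨y1, y2⟩, hy⟩ h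
  simp only [Prod.mk.injEq, Fin.mk.injEq] at h
  simp [Prod.ext_iff, h.1, h.2]

lemma mul_inj (hab : Nat.Coprime a b) :
    Function.Injective (fun m : Fin b => (⟨m * a % b, Nat.mod_lt _ m.pos⟩ : Fin b)) := by
  intro m1 m2 h
  simp only [Fin.mk.injEq] at h
  have : (m1 : ℕ) ≡ m2 [MOD b] := Nat.ModEq.cancel_right_of_coprime hab.symm h
  exact Fin.ext (by rwa [Nat.ModEq, Nat.mod_eq_of_lt m1.2, Nat.mod_eq_of_lt m2.2] at this)

lemma exists_res (hb : 0 < b) (hab : Nat.Coprime a b) (j : ℕ) :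
    ∃ m < b, m * a % b = j % b := by
  have : Function.Bijective (fun m : Fin b => (⟨m * a % b, Nat.mod_lt _ m.pos⟩ : Fin b)) :=
    Finite.injective_iff_bijective.mp (mul_inj hab)
  obtain ⟨m, hm⟩ := this.2 ⟨j % b, Nat.mod_lt _ hb⟩
  exact ⟨m, m.2, by simpa [Fin.ext_iff] using hm⟩

lemma key (ha : 0 < a) (hb : 0 < b) (hab : Nat.Coprime a b) (k j m : ℕ)
    (hm : m < b) (hmod : m * a % b = j % b) :
    repCount a b j ≤ k ↔ j < m * a + k * (a * b) := by
  have := rep_finite ha hb (a := a) (b := b) j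
  constructor
  · -- contrapositive: if m*a + k*a*b ≤ j then k+1 ≤ repCount
    intro hle
    by_contra hj
    push_neg at hj
    have hinj : ∃ ψ : Fin (k+1) → {p : ℕ × ℕ // p.1 * a + p.2 * b = j},
        Function.Injective ψ := by
      have hx : ∀ i : ℕ, i ≤ k → (m + i * b) * a ≤ j := by
        intro i hi
        have : i * b * a ≤ k * b * a := by
          exact Nat.mul_le_mul_right _ (Nat.mul_le_mul_right _ hi)
        calc (m + i * b) * a = m * a + i * b * a := by ring
          _ ≤ m * a + k * b * a := by omega
          _ = m * a + k * (a * b) := by ring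
          _ ≤ j := hj
      have hdvd : ∀ i : ℕ, i ≤ k → b ∣ j - (m + i * b) * a := by
        intro i hi
        apply (Nat.modEq_iff_dvd' (hx i hi)).mp
        show (m + i * b) * a % b = j % b
        have : (m + i * b) * a = m * a + b * (i * a) := by ring
        rw [this, Nat.add_mul_mod_self_left, hmod]
      refine ⟨fun i => ⟨(m + i * b, (j - (m + i * b) * a) / b), ?_⟩, ?_⟩
      · show (m + i * b) * a + (j - (m + i * b) * a) / b * b = j
        have h1 := Nat.div_mul_cancel (hdvd i (Nat.lt_succ_iff.mp i.2))
        have h2 := hx i (Nat.lt_succ_iff.mp i.2)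
        omega
      · intro i1 i2 h
        simp only [Subtype.mk.injEq, Prod.mk.injEq] at h
        have := h.1
        have : (i1 : ℕ) * b = i2 * b := by omega
        exact Fin.ext (Nat.eq_of_mul_eq_mul_right hb this)
    obtain ⟨ψ, hψ⟩ := hinj
    have := Nat.card_le_card_of_injective ψ hψ
    simp only [Nat.card_eq_fintype_card, Fintype.card_fin] at this
    have : k + 1 ≤ repCount a b j := by
      unfold repCount; omega
    omega
  · intro hj
    -- inject into Fin k
    have hφ : ∀ p : {p : ℕ × ℕ // p.1 * a + p.2 * b = j}, p.1.1 % b = m ∧ p.1.1 / b < k := by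
      intro ⟨⟨x, y⟩, hxy0⟩
      have hxy : x * a + y * b = j := hxy0
      have h1 : x * a % b = j % b := by
        rw [← hxy]
        have : x * a + y * b = x * a + b * y := by ring
        rw [this, Nat.add_mul_mod_self_left]
      have h2 : (x : ℕ) ≡ m [MOD b] :=
        Nat.ModEq.cancel_right_of_coprime hab.symm (by rw [Nat.ModEq, h1, hmod])
      have h3 : x % b = m := by rw [Nat.ModEq, Nat.mod_eq_of_lt hm] at h2; exact h2
      refine ⟨h3, ?_⟩
      have h4 : x = m + x / b * b := by
        have hd := Nat.mod_add_div x b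
        have hcomm : b * (x / b) = x / b * b := Nat.mul_comm _ _
        omega
      have h5 : x * a ≤ j := by omega
      have h6 : m * a + x / b * (b * a) ≤ j := by
        have he : (m + x / b * b) * a = m * a + x / b * (b * a) := by ring
        rw [h4, he] at h5
        exact h5
      by_contra hk
      push_neg at hk
      have h7 : k * (a * b) ≤ x / b * (b * a) := by
        calc k * (a * b) = k * (b * a) := by ring
          _ ≤ x / b * (b * a) := Nat.mul_le_mul_right _ hk
      omega
    set φ : {p : ℕ × ℕ // p.1 * a + p.2 * b = j} → Fin k :=
      fun p => ⟨p.1.1 / b, (hφ p).2⟩ with hφdef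
    have hinj : Function.Injective φ := by
      rintro ⟨⟨x1, x2⟩, hx⟩ ⟨⟨y1, y2⟩, hy⟩ h
      simp only [hφdef, Fin.mk.injEq] at h
      have e1 : x1 % b = m := (hφ ⟨⟨x1, x2⟩, hx⟩).1
      have e2 : y1 % b = m := (hφ ⟨⟨y1, y2⟩, hy⟩).1
      have hx' : x1 * a + x2 * b = j := hx
      have hy' : y1 * a + y2 * b = j := hy
      have hx1 : x1 = y1 := by
        have d1 := Nat.mod_add_div x1 b
        have d2 := Nat.mod_add_div y1 b
        rw [h] at d1
        omega
      have hx2 : x2 = y2 := by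
        subst hx1
        have : x2 * b = y2 * b := by omega
        exact Nat.eq_of_mul_eq_mul_right hb this
      simp [Prod.ext_iff, hx1, hx2]
    have := Nat.card_le_card_of_injective φ hinj
    simpa [repCount, Nat.card_eq_fintype_card] using this

end aux

/-- The set of nonnegative integers with at most `k` representations is finite of
cardinality `(a-1)(b-1)/2 + abk`. -/
theorem c_le_k_eq (a b k : ℕ) (ha : 0 < a) (hb : 0 < b) (hab : Nat.Coprime a b) :
    {j : ℕ | repCount a b j ≤ k}.Finite ∧
      2 * {j : ℕ | repCount a b j ≤ k}.ncard = (a - 1) * (b - 1) + 2 * a * b * k := by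
  classical
  set F : Finset ℕ := (Finset.range b).biUnion
    (fun m => (Finset.range (k * a + m * a / b)).image (fun s => m * a % b + s * b)) with hF
  have hset : {j : ℕ | repCount a b j ≤ k} = ↑F := by
    ext j
    simp only [Set.mem_setOf_eq, Finset.coe_biUnion, Finset.mem_coe, Finset.mem_biUnion,
      Finset.mem_range, Finset.mem_image, hF, Set.mem_iUnion]
    constructor
    · intro hj
      obtain ⟨m, hm, hmod⟩ := exists_res hb hab j
      refine ⟨m, hm, j / b, ?_, ?_⟩
      · have hlt := (key ha hb hab k j m hm hmod).mp hj
        have h1 := Nat.mod_add_div j b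
        have h2 := Nat.mod_add_div (m * a) b
        -- j = j%b + b*(j/b) < m*a + k*a*b = m*a%b + b*(m*a/b) + k*a*b
        -- j%b = m*a%b so b*(j/b) < b*(m*a/b) + k*a*b = b*(m*a/b + k*a)
        have h3 : b * (j / b) < b * (m * a / b + k * a) := by
          have : b * (m * a / b + k * a) = b * (m * a / b) + k * (a * b) := by ring
          omega
        have := Nat.lt_of_mul_lt_mul_left h3
        omega
      · have hmod' := Nat.mod_add_div j b
        have hc : b * (j / b) = j / b * b := Nat.mul_comm _ _
        rw [hmod]
        omega
    · rintro ⟨m, hm, s, hs, rfl⟩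
      have hmod : m * a % b = (m * a % b + s * b) % b := by
        rw [Nat.add_mul_mod_self_right, Nat.mod_mod_of_dvd _ dvd_rfl]
      apply (key ha hb hab k _ m hm hmod).mpr
      have h2 := Nat.mod_add_div (m * a) b
      have h3 : s * b < (k * a + m * a / b) * b := (Nat.mul_lt_mul_right hb).mpr hs
      have h4 : (k * a + m * a / b) * b = k * (a * b) + b * (m * a / b) := by ring
      omega
  -- cardinality of F
  have hdisj : ∀ m1 ∈ Finset.range b, ∀ m2 ∈ Finset.range b, m1 ≠ m2 →
      Disjoint ((Finset.range (k * a + m1 * a / b)).image (fun s => m1 * a % b + s * b))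
        ((Finset.range (k * a + m2 * a / b)).image (fun s => m2 * a % b + s * b)) := by
    intro m1 h1 m2 h2 hne
    simp only [Finset.mem_range] at h1 h2
    rw [Finset.disjoint_left]
    rintro x hx1 hx2
    simp only [Finset.mem_image, Finset.mem_range] at hx1 hx2
    obtain ⟨s1, _, e1⟩ := hx1
    obtain ⟨s2, _, e2⟩ := hx2
    have hr1 : m1 * a % b < b := Nat.mod_lt _ hb
    have hr2 : m2 * a % b < b := Nat.mod_lt _ hb
    have : m1 * a % b = m2 * a % b := by
      have q1 : x % b = m1 * a % b := by
        rw [← e1, Nat.add_mul_mod_self_right, Nat.mod_eq_of_lt hr1]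
      have q2 : x % b = m2 * a % b := by
        rw [← e2, Nat.add_mul_mod_self_right, Nat.mod_eq_of_lt hr2]
      omega
    exact hne (by
      have hcong : (m1 : ℕ) ≡ m2 [MOD b] :=
        Nat.ModEq.cancel_right_of_coprime hab.symm ‹m1 * a % b = m2 * a % b›
      rw [Nat.ModEq, Nat.mod_eq_of_lt h1, Nat.mod_eq_of_lt h2] at hcong
      exact hcong)
  have hcard : F.card = ∑ m ∈ Finset.range b, (k * a + m * a / b) := by
    rw [hF, Finset.card_biUnion hdisj]
    apply Finset.sum_congr rfl
    intro m _
    rw [Finset.card_image_of_injective _ (fun s1 s2 h => by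
      have : s1 * b = s2 * b := by omega
      exact Nat.eq_of_mul_eq_mul_right hb this), Finset.card_range]
  -- residue sum
  have hres : ∑ m ∈ Finset.range b, (m * a % b) = ∑ m ∈ Finset.range b, m := by
    rw [Finset.sum_range fun m => m * a % b, Finset.sum_range fun m => m]
    exact Fintype.sum_bijective _ (Finite.injective_iff_bijective.mp (mul_inj hab))
      (fun m : Fin b => (m : ℕ) * a % b) (fun r : Fin b => (r : ℕ)) (fun m => rfl)
  -- 2 * sum of divs
  have hdivsum : 2 * (∑ m ∈ Finset.range b, m * a / b) = (a - 1) * (b - 1) := by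
    have h1 : ∑ m ∈ Finset.range b, m * a =
        b * (∑ m ∈ Finset.range b, m * a / b) + ∑ m ∈ Finset.range b, (m * a % b) := by
      rw [Finset.mul_sum, ← Finset.sum_add_distrib]
      apply Finset.sum_congr rfl
      intro m _
      exact (Nat.div_add_mod (m * a) b).symm
    have h2 : ∑ m ∈ Finset.range b, m * a = (∑ m ∈ Finset.range b, m) * a := by
      rw [Finset.sum_mul]
    have h3 : (∑ m ∈ Finset.range b, m) * 2 = b * (b - 1) := Finset.sum_range_id_mul_two b
    set M := ∑ m ∈ Finset.range b, m
    set T := ∑ m ∈ Finset.range b, m * a / b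
    rw [hres] at h1
    -- M * a = b * T + M ; 2M = b(b-1)
    have h4 : b * (2 * T) = b * ((a - 1) * (b - 1)) := by
      have : 2 * (M * a) = 2 * (b * T) + 2 * M := by omega
      have h5 : 2 * (M * a) = (M * 2) * a := by ring
      have h6 : (M * 2) * a = b * (b-1) * a := by rw [h3]
      have h7 : b * ((a-1)*(b-1)) = b * (b-1) * a - b*(b-1) := by
        cases a with
        | zero => omega
        | succ a' =>
          have hr : b * (b - 1) * (a' + 1) = b * ((a' + 1 - 1) * (b - 1)) + b * (b - 1) := by
            simp only [Nat.add_sub_cancel]; ring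
          omega
      have hbt : b * (2 * T) = 2 * (b * T) := by ring
      omega
    exact Nat.eq_of_mul_eq_mul_left hb h4
  refine ⟨hset ▸ F.finite_toSet, ?_⟩
  rw [hset, Set.ncard_coe_finset, hcard, Finset.sum_add_distrib, Finset.sum_const,
    Finset.card_range, smul_eq_mul]
  have he : 2 * a * b * k = 2 * (b * (k * a)) := by ring
  omega
end

section
/- Let a and b be coprime positive integers and k ≥ 0. Then the sum of all nonnegative integers with at most k representations in the form ma + nb (m, n ∈ ℕ) equals (1/2)a²b²k² + (1/2)(ab - a - b)abk + (1/6)a²b² - (1/4)(a + b - 1)ab + (1/12)(a² + b² - 1); that is, 12·∑_{j ∈ ℕ∖S_k(a,b)} j = 6a²b²k² + 6(ab-a-b)abk + 2a²b² - 3(a+b-1)ab + (a² + b² - 1). -/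
open Finset

theorem two_mul_mul_sum_range_add_mul {R : Type*} [CommRing R] (r d : R) (n : ℕ) :
    2 * d * ∑ s ∈ range n, (r + s * d) = (r + n * d) * (r + n * d - d) - r * (r - d) := by
  induction n with
  | zero => simp
  | succ n ih => rw [sum_range_succ, mul_add, ih]; push_cast; ring

theorem six_mul_sum_range_quadratic {R : Type*} [CommRing R] (α β γ : R) (n : ℕ) :
    6 * ∑ i ∈ range n, (α * i ^ 2 + β * i + γ) =
      α * n * (n - 1) * (2 * n - 1) + 3 * β * n * (n - 1) + 6 * γ * n := by
  induction n with
  | zero => simp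
  | succ n ih => rw [sum_range_succ, mul_add, ih]; push_cast; ring

theorem ncard_setOf_add_mul_le_le_iff {c d : ℕ} (hd : 0 < d) (n k : ℕ) :
    {t : ℕ | c + t * d ≤ n}.ncard ≤ k ↔ n < c + k * d := by
  constructor
  · intro h
    by_contra! hle
    have hsub : Set.Iic k ⊆ {t : ℕ | c + t * d ≤ n} := fun t (ht : t ≤ k) =>
      (by gcongr : c + t * d ≤ c + k * d).trans hle
    have hfin : {t : ℕ | c + t * d ≤ n}.Finite := (Set.finite_Iic n).subset
      fun t (ht : c + t * d ≤ n) => (Nat.le_mul_of_pos_right t hd).trans (by omega)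
    have hcard := Set.ncard_le_ncard hsub hfin
    rw [Set.ncard_Iic_nat] at hcard
    omega
  · intro h
    have hsub : {t : ℕ | c + t * d ≤ n} ⊆ Set.Iio k := fun t (ht : c + t * d ≤ n) => by
      by_contra hkt
      have hkt : k * d ≤ t * d := Nat.mul_le_mul_right d (not_lt.mp hkt)
      omega
    simpa using Set.ncard_le_ncard hsub

section

variable {a b : ℕ}

theorem mul_mod_injOn (hab : a.Coprime b) : Set.InjOn (fun m => m * a % b) (range b) := by
  intro x hx y hy h
  have hxy : x ≡ y [MOD b] := Nat.ModEq.cancel_right_of_coprime hab.symm h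
  rwa [Nat.ModEq, Nat.mod_eq_of_lt (mem_range.mp hx), Nat.mod_eq_of_lt (mem_range.mp hy)] at hxy

theorem image_range_mul_mod (hab : a.Coprime b) : (range b).image (fun m => m * a % b) = range b :=
  eq_of_subset_of_card_le
    (fun _ hx => by
      obtain ⟨m, hm, rfl⟩ := mem_image.mp hx
      exact mem_range.mpr (Nat.mod_lt _ (Nat.zero_lt_of_lt (mem_range.mp hm))))
    (card_image_of_injOn (mul_mod_injOn hab)).ge

theorem sum_range_mul_mod {M : Type*} [AddCommMonoid M] (hab : a.Coprime b) (g : ℕ → M) :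
    ∑ m ∈ range b, g (m * a % b) = ∑ i ∈ range b, g i := by
  conv_rhs => rw [← image_range_mul_mod hab]
  exact (sum_image (mul_mod_injOn hab)).symm

theorem exists_lt_mul_modEq (hb : 0 < b) (hab : a.Coprime b) (j : ℕ) :
    ∃ m < b, m * a ≡ j [MOD b] := by
  obtain ⟨m, hm, hmj⟩ :=
    mem_image.mp ((image_range_mul_mod hab).symm ▸ mem_range.mpr (Nat.mod_lt j hb))
  exact ⟨m, mem_range.mp hm, hmj⟩

variable {k m j : ℕ}

theorem mod_eq_of_mul_add_mul_eq_s15 (hab : a.Coprime b) (hm : m < b) (hj : m * a ≡ j [MOD b])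
    {x y : ℕ} (hxy : x * a + y * b = j) : x % b = m := by
  have hx : x * a ≡ m * a [MOD b] := by
    rw [← hxy] at hj
    exact (Nat.add_mul_mod_self_right _ _ _).symm.trans hj.symm
  exact Eq.trans (Nat.ModEq.cancel_right_of_coprime hab.symm hx) (Nat.mod_eq_of_lt hm)

-- The representations of `j` are the pairs `(m + t * b, y)`, indexed by `t`.
theorem repCount_eq_ncard_s15 (hab : a.Coprime b) (hm : m < b) (hj : m * a ≡ j [MOD b]) :
    repCount a b j = {t : ℕ | m * a + t * (a * b) ≤ j}.ncard := by
  have hb : 0 < b := by omega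
  have hdecomp : ∀ {x y : ℕ}, x * a + y * b = j → m + x / b * b = x := fun {x _} hxy => by
    have := Nat.mod_add_div' x b
    rwa [mod_eq_of_mul_add_mul_eq_s15 hab hm hj hxy] at this
  refine Set.ncard_congr (fun p _ => p.1 / b) ?_ ?_ ?_
  · rintro ⟨x, y⟩ (hxy : x * a + y * b = j)
    show m * a + x / b * (a * b) ≤ j
    calc m * a + x / b * (a * b) = (m + x / b * b) * a := by ring
      _ = x * a := by rw [hdecomp hxy]
      _ ≤ j := by omega
  · rintro ⟨x, y⟩ ⟨x', y'⟩ (hxy : x * a + y * b = j) (hxy' : x' * a + y' * b = j)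
      (h : x / b = x' / b)
    have hx : x = x' := by rw [← hdecomp hxy, ← hdecomp hxy', h]
    subst hx
    have hy : y = y' := Nat.eq_of_mul_eq_mul_right hb (by omega)
    rw [hy]
  · intro t (ht : m * a + t * (a * b) ≤ j)
    have hle : (m + t * b) * a ≤ j := by nlinarith
    have hmod : (m + t * b) * a ≡ j [MOD b] := by
      rw [add_mul, mul_assoc, mul_comm b, ← mul_assoc]
      exact (Nat.add_mul_mod_self_right _ _ _).trans hj
    obtain ⟨y, hy⟩ := (Nat.modEq_iff_dvd' hle).mp hmod
    refine ⟨(m + t * b, y), (by rw [mul_comm y b]; omega : (m + t * b) * a + y * b = j), ?_⟩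
    show (m + t * b) / b = t
    rw [Nat.add_mul_div_right _ _ hb, Nat.div_eq_of_lt hm, zero_add]

theorem repCount_le_iff_lt (ha : 0 < a) (hab : a.Coprime b) (hm : m < b)
    (hj : m * a ≡ j [MOD b]) : repCount a b j ≤ k ↔ j < m * a + k * (a * b) := by
  rw [repCount_eq_ncard_s15 hab hm hj]
  exact ncard_setOf_add_mul_le_le_iff (Nat.mul_pos ha (by omega)) j k

theorem repCount_le_iff_exists (ha : 0 < a) (hb : 0 < b) (hab : a.Coprime b) :
    repCount a b j ≤ k ↔ ∃ m < b, ∃ s < k * a + m * a / b, m * a % b + s * b = j := by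
  constructor
  · intro h
    obtain ⟨m, hm, hmj⟩ := exists_lt_mul_modEq hb hab j
    rw [repCount_le_iff_lt ha hab hm hmj] at h
    refine ⟨m, hm, j / b, Nat.lt_of_mul_lt_mul_right (a := b) ?_, ?_⟩
    · have hmod : m * a % b = j % b := hmj
      have hj := Nat.mod_add_div' j b
      have hma := Nat.mod_add_div' (m * a) b
      have hT : (k * a + m * a / b) * b = k * (a * b) + m * a / b * b := by ring
      omega
    · rw [hmj]
      exact Nat.mod_add_div' j b
  · rintro ⟨m, hm, s, hs, rfl⟩
    rw [repCount_le_iff_lt ha hab hm (by simp [Nat.ModEq, Nat.add_mul_mod_self_right])]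
    have hsb : (s + 1) * b ≤ (k * a + m * a / b) * b := Nat.mul_le_mul_right b hs
    have hma := Nat.mod_add_div' (m * a) b
    have hr := Nat.mod_lt (m * a) hb
    have hT : (k * a + m * a / b) * b = k * (a * b) + m * a / b * b := by ring
    rw [add_one_mul] at hsb
    omega

theorem two_mul_mul_finsum_setOf_repCount_le (ha : 0 < a) (hb : 0 < b) (hab : a.Coprime b) :
    2 * b * ∑ᶠ j ∈ {j | repCount a b j ≤ k}, (j : ℤ) =
      ∑ m ∈ range b,
        ((m * a + k * (a * b) : ℤ) * (m * a + k * (a * b) - b) - m * (m - b)) := by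
  set blocks := (range b).sigma fun m => range (k * a + m * a / b)
  have hset : {j | repCount a b j ≤ k} = ↑(blocks.image fun x => x.1 * a % b + x.2 * b) := by
    ext j
    simp [repCount_le_iff_exists ha hb hab, blocks, and_assoc]
  have hinj : Set.InjOn (fun x : (_ : ℕ) × ℕ => x.1 * a % b + x.2 * b) blocks := by
    rintro ⟨m, s⟩ hms ⟨m', s'⟩ hms' (h : m * a % b + s * b = m' * a % b + s' * b)
    simp only [blocks, coe_sigma, Set.mem_sigma_iff, mem_coe] at hms hms'
    obtain rfl : m = m' := mul_mod_injOn hab hms.1 hms'.1 (by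
      simpa [Nat.add_mul_mod_self_right, Nat.mod_mod] using congr_arg (· % b) h)
    obtain rfl : s = s' := Nat.eq_of_mul_eq_mul_right hb (by omega)
    rfl
  have hblock (m : ℕ) :
      2 * b * ∑ s ∈ range (k * a + m * a / b), ((m * a % b + s * b : ℕ) : ℤ) =
        (m * a + k * (a * b) : ℤ) * (m * a + k * (a * b) - b) -
          (m * a % b : ℕ) * ((m * a % b : ℕ) - b) := by
    have hX : m * a % b + (k * a + m * a / b) * b = m * a + k * (a * b) := by
      conv_rhs => rw [← Nat.mod_add_div' (m * a) b]
      ring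
    have hX' : ((m * a % b : ℕ) : ℤ) + ((k * a + m * a / b : ℕ) : ℤ) * b =
        m * a + k * (a * b) := by
      exact_mod_cast hX
    rw [sum_congr rfl fun s _ => by rw [Nat.cast_add, Nat.cast_mul],
      two_mul_mul_sum_range_add_mul, hX']
  rw [hset, finsum_mem_coe_finset, sum_image hinj, sum_sigma, mul_sum,
    sum_congr rfl fun m _ => hblock m, sum_sub_distrib,
    sum_range_mul_mod hab fun i => (i : ℤ) * (i - b), ← sum_sub_distrib]

end

/-- Twelve times the sum of all nonnegative integers with at most `k` representations
equals `6a²b²k² + 6(ab-a-b)abk + 2a²b² - 3(a+b-1)ab + (a² + b² - 1)`. -/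
theorem s_le_k_eq (a b k : ℕ) (ha : 0 < a) (hb : 0 < b) (hab : Nat.Coprime a b) :
    12 * (∑ᶠ j ∈ {j : ℕ | repCount a b j ≤ k}, (j : ℤ)) =
      6 * (a : ℤ) ^ 2 * (b : ℤ) ^ 2 * (k : ℤ) ^ 2 +
        6 * ((a : ℤ) * b - a - b) * a * b * k +
        2 * (a : ℤ) ^ 2 * (b : ℤ) ^ 2 - 3 * ((a : ℤ) + b - 1) * a * b +
        ((a : ℤ) ^ 2 + (b : ℤ) ^ 2 - 1) := by
  set c : ℤ := k * (a * b)
  refine mul_left_cancel₀ (by positivity : (2 * b : ℤ) ≠ 0) ?_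
  calc 2 * b * (12 * ∑ᶠ j ∈ {j : ℕ | repCount a b j ≤ k}, (j : ℤ))
      = 2 * (6 * (2 * b * ∑ᶠ j ∈ {j : ℕ | repCount a b j ≤ k}, (j : ℤ))) := by ring
    _ = 2 * (6 * ∑ m ∈ range b, (((a : ℤ) ^ 2 - 1) * m ^ 2 + (2 * a * c - a * b + b) * m
          + c * (c - b))) := by
      rw [two_mul_mul_finsum_setOf_repCount_le ha hb hab]
      congr 2
      exact sum_congr rfl fun m _ => by ring
    _ = _ := by rw [six_mul_sum_range_quadratic]; ring
end

section
/- Let a and b be coprime positive integers. Then for every nonnegative integer j, r(a,b; j + ab) = r(a,b; j) + 1; equivalently, for every j ≥ ab, the number of representations of j in the form ma + nb (m, n ∈ ℕ) exceeds the number of representations of j - ab by exactly one. -/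
lemma repFinite (a b j : ℕ) (ha : 0 < a) (hb : 0 < b) :
    Finite {p : ℕ × ℕ // p.1 * a + p.2 * b = j} := by
  have : {p : ℕ × ℕ | p.1 * a + p.2 * b = j}.Finite := by
    apply Set.Finite.subset ((Set.finite_Iic j).prod (Set.finite_Iic j))
    rintro ⟨m, n⟩ h
    simp only [Set.mem_setOf_eq] at h
    constructor <;> simp only [Set.mem_Iic] <;> nlinarith
  exact this.to_subtype

lemma unique_small (a b N : ℕ) (ha : 0 < a) (hab : Nat.Coprime a b) {m n m' n' : ℕ}
    (h1 : m * a + n * b = N) (h2 : m' * a + n' * b = N)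
    (hn : n < a) (hn' : n' < a) : m = m' ∧ n = n' := by
  have e1 : n * b % a = N % a := by rw [← h1, add_comm, Nat.add_mul_mod_self_right]
  have e2 : n' * b % a = N % a := by rw [← h2, add_comm, Nat.add_mul_mod_self_right]
  have hmod : n * b ≡ n' * b [MOD a] := e1.trans e2.symm
  have hnn : n ≡ n' [MOD a] := Nat.ModEq.cancel_right_of_coprime hab hmod
  have hn_eq : n = n' := by
    have := hnn
    unfold Nat.ModEq at this
    rwa [Nat.mod_eq_of_lt hn, Nat.mod_eq_of_lt hn'] at this
  subst hn_eq
  refine ⟨?_, rfl⟩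
  have : m * a = m' * a := by omega
  exact Nat.eq_of_mul_eq_mul_right ha this

lemma exists_small (a b j : ℕ) (ha : 0 < a) (hb : 0 < b) (hab : Nat.Coprime a b) :
    ∃ m n, n < a ∧ m * a + n * b = j + a * b := by
  haveI : NeZero a := ⟨ha.ne'⟩
  set n0 := ((j : ZMod a) * (b : ZMod a)⁻¹).val with hn0def
  have hlt : n0 < a := ZMod.val_lt _
  have hcast : ((n0 * b : ℕ) : ZMod a) = (j : ZMod a) := by
    push_cast
    rw [hn0def, ZMod.natCast_val, ZMod.cast_id, mul_assoc, ZMod.inv_mul_of_unit]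
    · ring
    · exact (ZMod.isUnit_iff_coprime b a).mpr hab.symm
  have hmod : n0 * b ≡ j [MOD a] := (ZMod.natCast_eq_natCast_iff _ _ _).mp hcast
  have hmod2 : n0 * b ≡ j + a * b [MOD a] := by
    refine hmod.trans ?_
    unfold Nat.ModEq
    rw [Nat.add_mul_mod_self_left]
  have hle : n0 * b ≤ j + a * b := by nlinarith
  have hdvd : a ∣ (j + a * b) - n0 * b := (Nat.modEq_iff_dvd' hle).mp hmod2
  refine ⟨(j + a * b - n0 * b) / a, n0, hlt, ?_⟩
  have := Nat.div_mul_cancel hdvd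
  omega

/-- Shifting by `a*b` increases the number of representations by exactly one:
`r(a,b; j + ab) = r(a,b; j) + 1`. -/
theorem repCount_add_ab (a b : ℕ) (ha : 0 < a) (hb : 0 < b) (hab : Nat.Coprime a b) :
    ∀ j : ℕ, repCount a b (j + a * b) = repCount a b j + 1 := by
  intro j
  haveI fin0 : Finite {p : ℕ × ℕ // p.1 * a + p.2 * b = j} := repFinite a b j ha hb
  haveI fin1 : Finite {p : ℕ × ℕ // p.1 * a + p.2 * b = j + a * b} :=
    repFinite a b (j + a * b) ha hb
  obtain ⟨m0, n0, hn0lt, hsol⟩ := exists_small a b j ha hb hab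
  let f : Option {p : ℕ × ℕ // p.1 * a + p.2 * b = j} →
      {p : ℕ × ℕ // p.1 * a + p.2 * b = j + a * b} :=
    fun o => match o with
    | none => ⟨(m0, n0), hsol⟩
    | some ⟨(m, n), h⟩ => ⟨(m, n + a), by
        have h' : m * a + n * b = j := h
        show m * a + (n + a) * b = j + a * b
        rw [add_mul]; omega⟩
  have hbij : Function.Bijective f := by
    constructor
    · rintro (_ | ⟨⟨m, n⟩, h⟩) (_ | ⟨⟨m', n'⟩, h'⟩) heq
      · rfl
      · exfalso
        have := congrArg (fun p => p.1.2) heq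
        simp only [f] at this
        omega
      · exfalso
        have := congrArg (fun p => p.1.2) heq
        simp only [f] at this
        omega
      · have h1 := congrArg (fun p => p.1.1) heq
        have h2 := congrArg (fun p => p.1.2) heq
        simp only [f] at h1 h2
        have : m = m' := h1
        have : n = n' := by omega
        subst ‹m = m'›; subst ‹n = n'›
        rfl
    · rintro ⟨⟨m, n⟩, h⟩
      rcases Nat.lt_or_ge n a with hlt | hge
      · obtain ⟨hm, hn⟩ := unique_small a b (j + a * b) ha hab hsol h hn0lt hlt
        exact ⟨none, by simp only [f]; exact Subtype.ext (Prod.ext hm hn)⟩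
      · have hnb : (n - a) * b + a * b = n * b := by
          rw [← add_mul, Nat.sub_add_cancel hge]
        have h' : m * a + n * b = j + a * b := h
        refine ⟨some ⟨(m, n - a), show m * a + (n - a) * b = j by omega⟩, ?_⟩
        apply Subtype.ext
        show ((m, n - a + a) : ℕ × ℕ) = (m, n)
        rw [Nat.sub_add_cancel hge]
  have e : Option {p : ℕ × ℕ // p.1 * a + p.2 * b = j} ≃
      {p : ℕ × ℕ // p.1 * a + p.2 * b = j + a * b} := Equiv.ofBijective f hbij
  unfold repCount
  rw [Nat.card_congr e.symm, Finite.card_option]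
end

section
/- Let p and q be distinct primes. Then the formal power series over ℤ whose j-th coefficient is 1 if j ∈ S_0(p,q) and 0 otherwise satisfies (∑_{j ∈ S_0(p,q)} X^j) · (1 - X) = Φ_{pq}(X), where Φ_{pq} is the pq-th cyclotomic polynomial; equivalently, ∑_{j ∈ S_0(p,q)} X^j = Φ_{pq}(X)/(1 - X) as formal power series. -/
/-!
Since `p` and `q` are coprime, every element of `S₀ = S₀(p,q)` is `m p + n q` for a unique
`n < p`, so the Apéry set `{s ∈ S₀ | s - p ∉ S₀}` is `{n q | n < p}`. Removing `S₀ + p` from `S₀`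
is multiplication by `1 - X^p`, hence
`(∑_{j ∈ S₀} X^j) (1 - X^p) = ∑_{n < p} X^{nq} = (1 - X^{pq}) / (1 - X^q)`.
On the other side, substituting `X^p` into `Φ_q (X - 1) = X^q - 1` and using
`Φ_q(X^p) = Φ_{pq} Φ_q` gives `Φ_{pq} (X^p - 1) (X^q - 1) = (X^{pq} - 1) (X - 1)`,
and `(1 - X^p) (1 - X^q)` cancels in `ℤ⟦X⟧`.
-/

open Polynomial in
theorem Polynomial.cyclotomic_prime_mul_prime_mul_X_pow_sub_one {p q : ℕ} (hp : p.Prime)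
    (hq : q.Prime) (hpq : p ≠ q) (R : Type*) [CommRing R] :
    cyclotomic (p * q) R * ((X ^ p - 1) * (X ^ q - 1)) = (X ^ (p * q) - 1) * (X - 1) := by
  have := Fact.mk hq
  have hexpand := cyclotomic_expand_eq_cyclotomic_mul hp
    (fun h => hpq ((Nat.prime_dvd_prime_iff_eq hp hq).1 h)) R
  have h := congrArg (expand R p) (cyclotomic_prime_mul_X_sub_one R q)
  simp only [map_mul, map_sub, map_pow, map_one, expand_X, hexpand] at h
  calc cyclotomic (p * q) R * ((X ^ p - 1) * (X ^ q - 1))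
      = cyclotomic (q * p) R * cyclotomic q R * (X ^ p - 1) * (X - 1) := by
        rw [← cyclotomic_prime_mul_X_sub_one R q, mul_comm p q]; ring
    _ = (X ^ (p * q) - 1) * (X - 1) := by rw [h, ← pow_mul]

def aperySet (s : Set ℕ) (c : ℕ) : Set ℕ :=
  {j | j ∈ s ∧ ∀ i ∈ s, i + c ≠ j}

def twoGenSemigroup (p q : ℕ) : Set ℕ :=
  {j | ∃ m n : ℕ, j = m * p + n * q}

theorem add_mem_twoGenSemigroup {p q i : ℕ} (hi : i ∈ twoGenSemigroup p q) :
    i + p ∈ twoGenSemigroup p q := by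
  obtain ⟨m, n, rfl⟩ := hi
  exact ⟨m + 1, n, by ring⟩

theorem aperySet_twoGenSemigroup {p q : ℕ} (hp : 0 < p) (hpq : p.Coprime q) :
    aperySet (twoGenSemigroup p q) p = (Finset.range p).image (· * q) := by
  ext j
  simp only [aperySet, twoGenSemigroup, Set.mem_ofPred_eq, Finset.coe_image, Finset.coe_range,
    Set.mem_image, Set.mem_Iio]
  constructor
  · rintro ⟨⟨m, n, rfl⟩, hmin⟩
    -- reduce `n` mod `p`; minimality forces the new coefficient of `p` to vanish
    have hj : m * p + n * q = (m + n / p * q) * p + n % p * q := by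
      nth_rewrite 1 [← Nat.div_add_mod n p]; ring
    refine ⟨n % p, Nat.mod_lt n hp, ?_⟩
    rcases (m + n / p * q).eq_zero_or_pos with h0 | hpos
    · rw [hj, h0]; ring
    · obtain ⟨t, ht⟩ := Nat.exists_eq_add_of_lt hpos
      exact absurd (by rw [hj, ht]; ring) (hmin (t * p + n % p * q) ⟨t, n % p, rfl⟩)
  · rintro ⟨n, hn, rfl⟩
    refine ⟨⟨0, n, by ring⟩, ?_⟩
    rintro i ⟨a, b, rfl⟩ h
    -- `(a + 1) p = (n - b) q` gives `n - b = k p` with `k q = a + 1 > 0`, so `n ≥ p`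
    have hz : (a : ℤ) * p + b * q + p = n * q := by exact_mod_cast h
    have hdvd : (p : ℤ) ∣ (n - b) * q := ⟨a + 1, by linear_combination -hz⟩
    obtain ⟨k, hk⟩ := (Nat.isCoprime_iff_coprime.mpr hpq).dvd_of_dvd_mul_right hdvd
    have hak : (a + 1 : ℤ) = k * q :=
      mul_left_cancel₀ (by positivity : (p : ℤ) ≠ 0) (by linear_combination hz + (q : ℤ) * hk)
    have hk1 : 1 ≤ k := by
      by_contra hk0
      nlinarith [Int.natCast_nonneg q, Int.natCast_nonneg a]
    have hnp : (n : ℤ) < p := by exact_mod_cast hn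
    nlinarith [Int.natCast_nonneg b]

open PowerSeries

section IndicatorSeries

variable (R : Type*) [Ring R]

open scoped Classical in
noncomputable def indicatorSeries (s : Set ℕ) : R⟦X⟧ :=
  mk fun j => if j ∈ s then 1 else 0

theorem indicatorSeries_mul_one_sub_X_pow {s : Set ℕ} {c : ℕ} (hs : ∀ i ∈ s, i + c ∈ s) :
    indicatorSeries R s * (1 - X ^ c) = indicatorSeries R (aperySet s c) := by
  classical
  ext j
  simp only [indicatorSeries, mul_sub, mul_one, map_sub, coeff_mul_X_pow', coeff_mk]
  by_cases hc : c ≤ j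
  · obtain ⟨i, rfl⟩ := Nat.exists_eq_add_of_le' hc
    rw [if_pos hc, Nat.add_sub_cancel]
    by_cases hi : i ∈ s
    · have hnot : i + c ∉ aperySet s c := fun h => h.2 i hi rfl
      simp [hi, hs i hi, hnot]
    · have hmem : i + c ∈ aperySet s c ↔ i + c ∈ s :=
        and_iff_left fun i' hi' h => hi (add_right_cancel h ▸ hi')
      simpa [hi] using if_congr hmem.symm rfl rfl
  · have hmem : j ∈ aperySet s c ↔ j ∈ s := and_iff_left (by omega)
    simpa [hc] using if_congr hmem.symm rfl rfl

theorem one_sub_X_pow_ne_zero [Nontrivial R] {c : ℕ} (hc : c ≠ 0) :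
    (1 - X ^ c : R⟦X⟧) ≠ 0 :=
  fun h => by simpa [hc] using congrArg constantCoeff h

theorem indicatorSeries_coe_finset (t : Finset ℕ) :
    indicatorSeries R (t : Set ℕ) = ∑ j ∈ t, X ^ j := by
  classical
  ext n
  simp [indicatorSeries, map_sum, coeff_X_pow]

theorem indicatorSeries_twoGenSemigroup_mul {p q : ℕ} (hp : 0 < p) (hq : 0 < q)
    (hpq : p.Coprime q) :
    indicatorSeries R (twoGenSemigroup p q) * ((1 - X ^ p) * (1 - X ^ q)) = 1 - X ^ (p * q) := by
  rw [← mul_assoc, indicatorSeries_mul_one_sub_X_pow R fun _ => add_mem_twoGenSemigroup,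
    aperySet_twoGenSemigroup hp hpq, indicatorSeries_coe_finset,
    Finset.sum_image fun _ _ _ _ h => Nat.eq_of_mul_eq_mul_right hq h]
  simp_rw [pow_mul']
  exact geom_sum_mul_neg _ _

end IndicatorSeries

open scoped Classical in
/-- For distinct primes `p` and `q`, the generating function of the numerical semigroup
`S₀(p,q) = {m*p + n*q : m, n ∈ ℕ}` satisfies
`(∑_{j ∈ S₀(p,q)} X^j) * (1 - X) = Φ_{pq}(X)`, where `Φ_{pq}` is the `pq`-th cyclotomic
polynomial. -/
theorem genfct_eq_cyclotomic (p q : ℕ) (hp : p.Prime) (hq : q.Prime) (hpq : p ≠ q) :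
    (PowerSeries.mk fun j => if ∃ m n : ℕ, j = m * p + n * q then (1 : ℤ) else 0) *
        (1 - PowerSeries.X) =
      ((Polynomial.cyclotomic (p * q) ℤ : Polynomial ℤ) : PowerSeries ℤ) := by
  change indicatorSeries ℤ (twoGenSemigroup p q) * (1 - X) = _
  have hne : (1 - X ^ p : ℤ⟦X⟧) * (1 - X ^ q) ≠ 0 :=
    mul_ne_zero (one_sub_X_pow_ne_zero ℤ hp.ne_zero) (one_sub_X_pow_ne_zero ℤ hq.ne_zero)
  have hΦ : (Polynomial.cyclotomic (p * q) ℤ : ℤ⟦X⟧) * ((X ^ p - 1) * (X ^ q - 1))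
      = (X ^ (p * q) - 1) * (X - 1) := by
    simpa using congrArg (fun f : Polynomial ℤ => (f : ℤ⟦X⟧))
      (Polynomial.cyclotomic_prime_mul_prime_mul_X_pow_sub_one hp hq hpq ℤ)
  refine mul_right_cancel₀ hne ?_
  rw [mul_right_comm, indicatorSeries_twoGenSemigroup_mul ℤ hp.pos hq.pos
    ((Nat.coprime_primes hp hq).2 hpq)]
  linear_combination -hΦ
end
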